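/- arXiv:1809.08472 — 4 statements merged into one kernel-verified Lean document; each statement's English description precedes it below -/
import Mathlib

section
/- If G and H are connected graphs whose line graphs L(G) and L(H) are isomorphic, then G is isomorphic to H, unless one of G, H is the triangle K_3 and the other is the star K_{1,3}. -/
open SimpleGraph
namespace WhitneyAux
variable {V W : Type} {G : SimpleGraph V} {H : SimpleGraph W}

/-- Two distinct edges share at most one vertex. -/
lemma unique_shared {e f : G.edgeSet} (hef : e ≠ f) {w1 w2 : V}
    (h1e : w1 ∈ (e : Sym2 V)) (h1f : w1 ∈ (f : Sym2 V))
    (h2e : w2 ∈ (e : Sym2 V)) (h2f : w2 ∈ (f : Sym2 V)) : w1 = w2 := by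
  by_contra hne
  exact hef (Subtype.ext (Sym2.eq_of_ne_mem hne h1e h2e h1f h2f))

lemma edge_endpoints (e : G.edgeSet) : ∃ p q : V, G.Adj p q ∧ (e : Sym2 V) = s(p, q) := by
  obtain ⟨z, hz⟩ := e
  induction z using Sym2.ind with
  | _ p q => exact ⟨p, q, G.mem_edgeSet.mp hz, rfl⟩

lemma edge_nondiag (e : G.edgeSet) : ¬ (e : Sym2 V).IsDiag :=
  G.not_isDiag_of_mem_edgeSet e.2

/-- Walk-closure: a set containing a vertex and closed under adjacency is everything. -/
lemma vert_closure (hG : G.Connected) {A : Set V} {v0 : V} (h0 : v0 ∈ A)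
    (hstep : ∀ p q, G.Adj p q → p ∈ A → q ∈ A) : ∀ u, u ∈ A := by
  have key : ∀ (s t : V) (w : G.Walk s t), s ∈ A → t ∈ A := by
    intro s t w
    induction w with
    | nil => exact id
    | cons h p ih => exact fun hs => ih (hstep _ _ h hs)
  intro u
  obtain ⟨w⟩ := hG.preconnected v0 u
  exact key _ _ w h0

/-- Three distinct pairwise-intersecting non-diagonal Sym2's: common vertex or triangle. -/
lemma triple_classify {e1 e2 e3 : Sym2 V} (hd1 : ¬ e1.IsDiag) (hd2 : ¬ e2.IsDiag)
    (h12 : e1 ≠ e2)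
    (m12 : ∃ v, v ∈ e1 ∧ v ∈ e2) (m13 : ∃ v, v ∈ e1 ∧ v ∈ e3)
    (m23 : ∃ v, v ∈ e2 ∧ v ∈ e3) :
    (∃ v, v ∈ e1 ∧ v ∈ e2 ∧ v ∈ e3) ∨
      ∃ a b c : V, a ≠ b ∧ a ≠ c ∧ b ≠ c ∧ e1 = s(a, b) ∧ e2 = s(b, c) ∧ e3 = s(a, c) := by
  obtain ⟨b, hb1, hb2⟩ := m12
  obtain ⟨a, he1, hab⟩ : ∃ a, e1 = s(b, a) ∧ a ≠ b :=
    ⟨_, (Sym2.other_spec hb1).symm, Sym2.other_ne hd1 hb1⟩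
  obtain ⟨c, he2, hcb⟩ : ∃ c, e2 = s(b, c) ∧ c ≠ b :=
    ⟨_, (Sym2.other_spec hb2).symm, Sym2.other_ne hd2 hb2⟩
  have hac : a ≠ c := by
    rintro rfl
    exact h12 (he1.trans he2.symm)
  by_cases hb3 : b ∈ e3
  · exact Or.inl ⟨b, hb1, hb2, hb3⟩
  · obtain ⟨w, hw1, hw3⟩ := m13
    obtain ⟨u, hu2, hu3⟩ := m23
    have hwa : w = a := by
      rw [he1, Sym2.mem_iff] at hw1
      rcases hw1 with rfl | rfl
      · exact absurd hw3 hb3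
      · rfl
    have huc : u = c := by
      rw [he2, Sym2.mem_iff] at hu2
      rcases hu2 with rfl | rfl
      · exact absurd hu3 hb3
      · rfl
    subst hwa huc
    have he3 : e3 = s(w, u) := ((Sym2.mem_and_mem_iff hac).mp ⟨hw3, hu3⟩)
    exact Or.inr ⟨w, b, u, hab, hac, hcb.symm, by rw [he1, Sym2.eq_swap], he2, he3⟩

/-- An edge meeting all three edges of a triangle is one of them. -/
lemma meets_triangle {a b c : V} (hab : a ≠ b) (hac : a ≠ c) (hbc : b ≠ c) {f : Sym2 V}
    (h1 : ∃ v, v ∈ f ∧ v ∈ s(a, b)) (h2 : ∃ v, v ∈ f ∧ v ∈ s(b, c))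
    (h3 : ∃ v, v ∈ f ∧ v ∈ s(a, c)) :
    f = s(a, b) ∨ f = s(b, c) ∨ f = s(a, c) := by
  obtain ⟨v1, hv1f, hv1⟩ := h1
  obtain ⟨v2, hv2f, hv2⟩ := h2
  obtain ⟨v3, hv3f, hv3⟩ := h3
  rw [Sym2.mem_iff] at hv1 hv2 hv3
  rcases hv1 with rfl | rfl
  · rcases hv2 with rfl | rfl
    · exact Or.inl ((Sym2.mem_and_mem_iff hab).mp ⟨hv1f, hv2f⟩)
    · exact Or.inr (Or.inr ((Sym2.mem_and_mem_iff hac).mp ⟨hv1f, hv2f⟩))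
  · rcases hv2 with rfl | rfl
    · rcases hv3 with rfl | rfl
      · exact Or.inl ((Sym2.mem_and_mem_iff hab).mp ⟨hv3f, hv1f⟩)
      · exact Or.inr (Or.inl ((Sym2.mem_and_mem_iff hbc).mp ⟨hv1f, hv3f⟩))
    · exact Or.inr (Or.inl ((Sym2.mem_and_mem_iff hbc).mp ⟨hv1f, hv2f⟩))

lemma exists_equiv_two (x0 x1 : X) (y0 y1 : Y) (hx : x0 ≠ x1) (hy : y0 ≠ y1)
    (ex : ∀ u, u = x0 ∨ u = x1) (ey : ∀ u, u = y0 ∨ u = y1) :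
    ∃ E : X ≃ Y, E x0 = y0 ∧ E x1 = y1 := by
  classical
  refine ⟨⟨fun u => if u = x0 then y0 else y1, fun u => if u = y0 then x0 else x1, ?_, ?_⟩, ?_, ?_⟩
  · intro u; rcases ex u with rfl | rfl <;> simp [hx, hx.symm, hy, hy.symm]
  · intro u; rcases ey u with rfl | rfl <;> simp [hx, hx.symm, hy, hy.symm]
  · simp
  · simp [hx.symm]

lemma exists_equiv_three (x0 x1 x2 : X) (y0 y1 y2 : Y)
    (h01 : x0 ≠ x1) (h02 : x0 ≠ x2) (h12 : x1 ≠ x2)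
    (k01 : y0 ≠ y1) (k02 : y0 ≠ y2) (k12 : y1 ≠ y2)
    (ex : ∀ u, u = x0 ∨ u = x1 ∨ u = x2) (ey : ∀ u, u = y0 ∨ u = y1 ∨ u = y2) :
    ∃ E : X ≃ Y, E x0 = y0 ∧ E x1 = y1 ∧ E x2 = y2 := by
  classical
  refine ⟨⟨fun u => if u = x0 then y0 else if u = x1 then y1 else y2,
      fun u => if u = y0 then x0 else if u = y1 then x1 else x2, ?_, ?_⟩, ?_, ?_, ?_⟩
  · intro u; rcases ex u with rfl | rfl | rfl <;>
      simp [h01, h01.symm, h02, h02.symm, h12, h12.symm, k01, k01.symm, k02, k02.symm,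
        k12, k12.symm]
  · intro u; rcases ey u with rfl | rfl | rfl <;>
      simp [h01, h01.symm, h02, h02.symm, h12, h12.symm, k01, k01.symm, k02, k02.symm,
        k12, k12.symm]
  · simp
  · simp [h01.symm]
  · simp [h02.symm, h12.symm]

lemma exists_equiv_four (x0 x1 x2 x3 : X) (y0 y1 y2 y3 : Y)
    (h01 : x0 ≠ x1) (h02 : x0 ≠ x2) (h03 : x0 ≠ x3) (h12 : x1 ≠ x2) (h13 : x1 ≠ x3)
    (h23 : x2 ≠ x3)
    (k01 : y0 ≠ y1) (k02 : y0 ≠ y2) (k03 : y0 ≠ y3) (k12 : y1 ≠ y2) (k13 : y1 ≠ y3)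
    (k23 : y2 ≠ y3)
    (ex : ∀ u, u = x0 ∨ u = x1 ∨ u = x2 ∨ u = x3)
    (ey : ∀ u, u = y0 ∨ u = y1 ∨ u = y2 ∨ u = y3) :
    ∃ E : X ≃ Y, E x0 = y0 ∧ E x1 = y1 ∧ E x2 = y2 ∧ E x3 = y3 := by
  classical
  refine ⟨⟨fun u => if u = x0 then y0 else if u = x1 then y1 else if u = x2 then y2 else y3,
      fun u => if u = y0 then x0 else if u = y1 then x1 else if u = y2 then x2 else x3,
      ?_, ?_⟩, ?_, ?_, ?_, ?_⟩
  · intro u; rcases ex u with rfl | rfl | rfl | rfl <;>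
      simp [h01, h01.symm, h02, h02.symm, h03, h03.symm, h12, h12.symm, h13, h13.symm,
        h23, h23.symm, k01, k01.symm, k02, k02.symm, k03, k03.symm, k12, k12.symm,
        k13, k13.symm, k23, k23.symm]
  · intro u; rcases ey u with rfl | rfl | rfl | rfl <;>
      simp [h01, h01.symm, h02, h02.symm, h03, h03.symm, h12, h12.symm, h13, h13.symm,
        h23, h23.symm, k01, k01.symm, k02, k02.symm, k03, k03.symm, k12, k12.symm,
        k13, k13.symm, k23, k23.symm]
  · simp
  · simp [h01.symm]
  · simp [h02.symm, h12.symm]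
  · simp [h03.symm, h13.symm, h23.symm]

lemma iso_meets_iff (φ : G.lineGraph ≃g H.lineGraph) {e f : G.edgeSet} (hne : e ≠ f) :
    (∃ w, w ∈ (φ e : Sym2 W) ∧ w ∈ (φ f : Sym2 W)) ↔
      ∃ z, z ∈ (e : Sym2 V) ∧ z ∈ (f : Sym2 V) := by
  have h2 : φ e ≠ φ f := fun h => hne (EquivLike.injective φ h)
  have hmap := φ.map_adj_iff (v := e) (w := f)
  rw [lineGraph_adj_iff_exists, lineGraph_adj_iff_exists] at hmap
  exact ⟨fun hm => (hmap.mp ⟨h2, hm⟩).2, fun hm => (hmap.mpr ⟨hne, hm⟩).2⟩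

lemma struct (φ : G.lineGraph ≃g H.lineGraph) (hG : G.Connected)
    {v x1 x2 x3 : V} (h12 : x1 ≠ x2) (h13 : x1 ≠ x3) (h23 : x2 ≠ x3)
    {e1 e2 e3 : G.edgeSet}
    (he1 : (e1 : Sym2 V) = s(v, x1)) (he2 : (e2 : Sym2 V) = s(v, x2))
    (he3 : (e3 : Sym2 V) = s(v, x3))
    (hbad : ¬ ∃ w : W, w ∈ (φ e1 : Sym2 W) ∧ w ∈ (φ e2 : Sym2 W) ∧ w ∈ (φ e3 : Sym2 W)) :
    (∀ u : V, u = v ∨ u = x1 ∨ u = x2 ∨ u = x3) ∧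
      (∀ f : G.edgeSet, (f : Sym2 V) = s(v, x1) ∨ (f : Sym2 V) = s(v, x2) ∨
        (f : Sym2 V) = s(v, x3) ∨ (f : Sym2 V) = s(x1, x2) ∨ (f : Sym2 V) = s(x1, x3) ∨
        (f : Sym2 V) = s(x2, x3)) ∧
      (∃ a b c : W, a ≠ b ∧ a ≠ c ∧ b ≠ c ∧ (φ e1 : Sym2 W) = s(a, b) ∧
        (φ e2 : Sym2 W) = s(b, c) ∧ (φ e3 : Sym2 W) = s(a, c)) := by
  -- basic facts
  have hv1 : v ≠ x1 := by
    intro h; exact edge_nondiag e1 (by rw [he1, ← h]; exact Sym2.mk_isDiag_iff.mpr rfl)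
  have hv2 : v ≠ x2 := by
    intro h; exact edge_nondiag e2 (by rw [he2, ← h]; exact Sym2.mk_isDiag_iff.mpr rfl)
  have hv3 : v ≠ x3 := by
    intro h; exact edge_nondiag e3 (by rw [he3, ← h]; exact Sym2.mk_isDiag_iff.mpr rfl)
  have ne12 : e1 ≠ e2 := by
    intro h; apply h12
    have : s(v, x1) = s(v, x2) := by rw [← he1, ← he2, h]
    exact (Sym2.congr_right ..).mp this
  have ne13 : e1 ≠ e3 := by
    intro h; apply h13
    have : s(v, x1) = s(v, x3) := by rw [← he1, ← he3, h]
    exact (Sym2.congr_right ..).mp this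
  have ne23 : e2 ≠ e3 := by
    intro h; apply h23
    have : s(v, x2) = s(v, x3) := by rw [← he2, ← he3, h]
    exact (Sym2.congr_right ..).mp this
  have hve1 : v ∈ (e1 : Sym2 V) := by rw [he1]; exact Sym2.mem_mk_left ..
  have hve2 : v ∈ (e2 : Sym2 V) := by rw [he2]; exact Sym2.mem_mk_left ..
  have hve3 : v ∈ (e3 : Sym2 V) := by rw [he3]; exact Sym2.mem_mk_left ..
  have hx1e1 : x1 ∈ (e1 : Sym2 V) := by rw [he1]; exact Sym2.mem_mk_right ..
  have hx2e2 : x2 ∈ (e2 : Sym2 V) := by rw [he2]; exact Sym2.mem_mk_right ..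
  have hx3e3 : x3 ∈ (e3 : Sym2 V) := by rw [he3]; exact Sym2.mem_mk_right ..
  -- images form a triangle
  have m12 := (iso_meets_iff φ ne12).mpr ⟨v, hve1, hve2⟩
  have m13 := (iso_meets_iff φ ne13).mpr ⟨v, hve1, hve3⟩
  have m23 := (iso_meets_iff φ ne23).mpr ⟨v, hve2, hve3⟩
  have hneimg12 : (φ e1 : Sym2 W) ≠ (φ e2 : Sym2 W) := by
    intro h; exact ne12 (EquivLike.injective φ (Subtype.ext h))
  obtain ⟨a, b, c, hab, hac, hbc, i1, i2, i3⟩ :=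
    (triple_classify (edge_nondiag (φ e1)) (edge_nondiag (φ e2)) hneimg12 m12 m13 m23).resolve_left
      hbad
  -- no fourth edge meets all three
  have key1 : ∀ f : G.edgeSet, f ≠ e1 → f ≠ e2 → f ≠ e3 →
      ¬((∃ z, z ∈ (f : Sym2 V) ∧ z ∈ (e1 : Sym2 V)) ∧
        (∃ z, z ∈ (f : Sym2 V) ∧ z ∈ (e2 : Sym2 V)) ∧
        (∃ z, z ∈ (f : Sym2 V) ∧ z ∈ (e3 : Sym2 V))) := by
    rintro f hf1 hf2 hf3 ⟨q1, q2, q3⟩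
    have w1 := (iso_meets_iff φ hf1).mpr q1
    have w2 := (iso_meets_iff φ hf2).mpr q2
    have w3 := (iso_meets_iff φ hf3).mpr q3
    rw [i1] at w1; rw [i2] at w2; rw [i3] at w3
    rcases meets_triangle hab hac hbc w1 w2 w3 with h | h | h
    · exact hf1 (EquivLike.injective φ (Subtype.ext (h.trans i1.symm)))
    · exact hf2 (EquivLike.injective φ (Subtype.ext (h.trans i2.symm)))
    · exact hf3 (EquivLike.injective φ (Subtype.ext (h.trans i3.symm)))
  -- every edge through v is one of the three
  have key2 : ∀ f : G.edgeSet, v ∈ (f : Sym2 V) → f = e1 ∨ f = e2 ∨ f = e3 := by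
    intro f hf
    by_contra hcon
    push_neg at hcon
    exact key1 f hcon.1 hcon.2.1 hcon.2.2
      ⟨⟨v, hf, hve1⟩, ⟨v, hf, hve2⟩, ⟨v, hf, hve3⟩⟩
  -- edges through x1 (other than the star) are x1x2 or x1x3
  have keyA : ∀ f : G.edgeSet, f ≠ e1 → f ≠ e2 → f ≠ e3 → x1 ∈ (f : Sym2 V) →
      (f : Sym2 V) = s(x1, x2) ∨ (f : Sym2 V) = s(x1, x3) := by
    intro f hf1 hf2 hf3 hx1f
    have hvf : v ∉ (f : Sym2 V) := by
      intro hvf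
      rcases key2 f hvf with h | h | h
      exacts [hf1 h, hf2 h, hf3 h]
    have himg : ∃ w, w ∈ (φ f : Sym2 W) ∧ w ∈ (φ e1 : Sym2 W) :=
      (iso_meets_iff φ hf1).mpr ⟨x1, hx1f, hx1e1⟩
    obtain ⟨w, hwf, hw1⟩ := himg
    rw [i1, Sym2.mem_iff] at hw1
    rcases hw1 with rfl | rfl
    · -- shares a with φ e3
      have : ∃ z, z ∈ (f : Sym2 V) ∧ z ∈ (e3 : Sym2 V) := by
        refine (iso_meets_iff φ hf3).mp ⟨w, hwf, ?_⟩
        rw [i3]; exact Sym2.mem_mk_left ..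
      obtain ⟨z, hzf, hze3⟩ := this
      rw [he3, Sym2.mem_iff] at hze3
      rcases hze3 with rfl | rfl
      · exact absurd hzf hvf
      · exact Or.inr ((Sym2.mem_and_mem_iff h13).mp ⟨hx1f, hzf⟩)
    · -- shares b with φ e2
      have : ∃ z, z ∈ (f : Sym2 V) ∧ z ∈ (e2 : Sym2 V) := by
        refine (iso_meets_iff φ hf2).mp ⟨w, hwf, ?_⟩
        rw [i2]; exact Sym2.mem_mk_left ..
      obtain ⟨z, hzf, hze2⟩ := this
      rw [he2, Sym2.mem_iff] at hze2
      rcases hze2 with rfl | rfl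
      · exact absurd hzf hvf
      · exact Or.inl ((Sym2.mem_and_mem_iff h12).mp ⟨hx1f, hzf⟩)
  have keyB : ∀ f : G.edgeSet, f ≠ e1 → f ≠ e2 → f ≠ e3 → x2 ∈ (f : Sym2 V) →
      (f : Sym2 V) = s(x1, x2) ∨ (f : Sym2 V) = s(x2, x3) := by
    intro f hf1 hf2 hf3 hx2f
    have hvf : v ∉ (f : Sym2 V) := by
      intro hvf
      rcases key2 f hvf with h | h | h
      exacts [hf1 h, hf2 h, hf3 h]
    have himg : ∃ w, w ∈ (φ f : Sym2 W) ∧ w ∈ (φ e2 : Sym2 W) :=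
      (iso_meets_iff φ hf2).mpr ⟨x2, hx2f, hx2e2⟩
    obtain ⟨w, hwf, hw2⟩ := himg
    rw [i2, Sym2.mem_iff] at hw2
    rcases hw2 with rfl | rfl
    · -- shares b with φ e1
      have : ∃ z, z ∈ (f : Sym2 V) ∧ z ∈ (e1 : Sym2 V) := by
        refine (iso_meets_iff φ hf1).mp ⟨w, hwf, ?_⟩
        rw [i1]; exact Sym2.mem_mk_right ..
      obtain ⟨z, hzf, hze1⟩ := this
      rw [he1, Sym2.mem_iff] at hze1
      rcases hze1 with rfl | rfl
      · exact absurd hzf hvf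
      · exact Or.inl ((Sym2.mem_and_mem_iff h12).mp ⟨hzf, hx2f⟩)
    · -- shares c with φ e3
      have : ∃ z, z ∈ (f : Sym2 V) ∧ z ∈ (e3 : Sym2 V) := by
        refine (iso_meets_iff φ hf3).mp ⟨w, hwf, ?_⟩
        rw [i3]; exact Sym2.mem_mk_right ..
      obtain ⟨z, hzf, hze3⟩ := this
      rw [he3, Sym2.mem_iff] at hze3
      rcases hze3 with rfl | rfl
      · exact absurd hzf hvf
      · exact Or.inr ((Sym2.mem_and_mem_iff h23).mp ⟨hx2f, hzf⟩)
  have keyC : ∀ f : G.edgeSet, f ≠ e1 → f ≠ e2 → f ≠ e3 → x3 ∈ (f : Sym2 V) →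
      (f : Sym2 V) = s(x1, x3) ∨ (f : Sym2 V) = s(x2, x3) := by
    intro f hf1 hf2 hf3 hx3f
    have hvf : v ∉ (f : Sym2 V) := by
      intro hvf
      rcases key2 f hvf with h | h | h
      exacts [hf1 h, hf2 h, hf3 h]
    have himg : ∃ w, w ∈ (φ f : Sym2 W) ∧ w ∈ (φ e3 : Sym2 W) :=
      (iso_meets_iff φ hf3).mpr ⟨x3, hx3f, hx3e3⟩
    obtain ⟨w, hwf, hw3⟩ := himg
    rw [i3, Sym2.mem_iff] at hw3
    rcases hw3 with rfl | rfl
    · -- shares a with φ e1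
      have : ∃ z, z ∈ (f : Sym2 V) ∧ z ∈ (e1 : Sym2 V) := by
        refine (iso_meets_iff φ hf1).mp ⟨w, hwf, ?_⟩
        rw [i1]; exact Sym2.mem_mk_left ..
      obtain ⟨z, hzf, hze1⟩ := this
      rw [he1, Sym2.mem_iff] at hze1
      rcases hze1 with rfl | rfl
      · exact absurd hzf hvf
      · exact Or.inl ((Sym2.mem_and_mem_iff h13).mp ⟨hzf, hx3f⟩)
    · -- shares c with φ e2
      have : ∃ z, z ∈ (f : Sym2 V) ∧ z ∈ (e2 : Sym2 V) := by
        refine (iso_meets_iff φ hf2).mp ⟨w, hwf, ?_⟩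
        rw [i2]; exact Sym2.mem_mk_right ..
      obtain ⟨z, hzf, hze2⟩ := this
      rw [he2, Sym2.mem_iff] at hze2
      rcases hze2 with rfl | rfl
      · exact absurd hzf hvf
      · exact Or.inr ((Sym2.mem_and_mem_iff h23).mp ⟨hzf, hx3f⟩)
  -- classification of vertices
  have C1 : ∀ u : V, u = v ∨ u = x1 ∨ u = x2 ∨ u = x3 := by
    have := vert_closure (A := {u | u = v ∨ u = x1 ∨ u = x2 ∨ u = x3}) hG
      (v0 := v) (Or.inl rfl) ?_
    · exact this
    · intro p q hadj hp
      set f : G.edgeSet := ⟨s(p, q), G.mem_edgeSet.mpr hadj⟩ with hfdef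
      have hqf : q ∈ (f : Sym2 V) := Sym2.mem_mk_right ..
      have hpf : p ∈ (f : Sym2 V) := Sym2.mem_mk_left ..
      by_cases htrip : f = e1 ∨ f = e2 ∨ f = e3
      · rcases htrip with rfl | rfl | rfl
        · rw [he1, Sym2.mem_iff] at hqf
          rcases hqf with rfl | rfl
          exacts [Or.inl rfl, Or.inr (Or.inl rfl)]
        · rw [he2, Sym2.mem_iff] at hqf
          rcases hqf with rfl | rfl
          exacts [Or.inl rfl, Or.inr (Or.inr (Or.inl rfl))]
        · rw [he3, Sym2.mem_iff] at hqf
          rcases hqf with rfl | rfl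
          exacts [Or.inl rfl, Or.inr (Or.inr (Or.inr rfl))]
      · push_neg at htrip
        obtain ⟨hf1, hf2, hf3⟩ := htrip
        rcases hp with hp | hp | hp | hp <;> rw [hp] at hpf
        · rcases key2 f hpf with h | h | h
          exacts [absurd h hf1, absurd h hf2, absurd h hf3]
        · rcases keyA f hf1 hf2 hf3 hpf with h | h
          · have : q ∈ s(x1, x2) := h ▸ hqf
            rw [Sym2.mem_iff] at this
            rcases this with rfl | rfl
            exacts [Or.inr (Or.inl rfl), Or.inr (Or.inr (Or.inl rfl))]
          · have : q ∈ s(x1, x3) := h ▸ hqf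
            rw [Sym2.mem_iff] at this
            rcases this with rfl | rfl
            exacts [Or.inr (Or.inl rfl), Or.inr (Or.inr (Or.inr rfl))]
        · rcases keyB f hf1 hf2 hf3 hpf with h | h
          · have : q ∈ s(x1, x2) := h ▸ hqf
            rw [Sym2.mem_iff] at this
            rcases this with rfl | rfl
            exacts [Or.inr (Or.inl rfl), Or.inr (Or.inr (Or.inl rfl))]
          · have : q ∈ s(x2, x3) := h ▸ hqf
            rw [Sym2.mem_iff] at this
            rcases this with rfl | rfl
            exacts [Or.inr (Or.inr (Or.inl rfl)), Or.inr (Or.inr (Or.inr rfl))]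
        · rcases keyC f hf1 hf2 hf3 hpf with h | h
          · have : q ∈ s(x1, x3) := h ▸ hqf
            rw [Sym2.mem_iff] at this
            rcases this with rfl | rfl
            exacts [Or.inr (Or.inl rfl), Or.inr (Or.inr (Or.inr rfl))]
          · have : q ∈ s(x2, x3) := h ▸ hqf
            rw [Sym2.mem_iff] at this
            rcases this with rfl | rfl
            exacts [Or.inr (Or.inr (Or.inl rfl)), Or.inr (Or.inr (Or.inr rfl))]
  refine ⟨C1, ?_, ⟨a, b, c, hab, hac, hbc, i1, i2, i3⟩⟩
  -- classification of edges
  intro f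
  by_cases htrip : f = e1 ∨ f = e2 ∨ f = e3
  · rcases htrip with rfl | rfl | rfl
    exacts [Or.inl he1, Or.inr (Or.inl he2), Or.inr (Or.inr (Or.inl he3))]
  · push_neg at htrip
    obtain ⟨hf1, hf2, hf3⟩ := htrip
    obtain ⟨p, q, hpq, hf⟩ := edge_endpoints f
    have hpf : p ∈ (f : Sym2 V) := by rw [hf]; exact Sym2.mem_mk_left ..
    rcases C1 p with hp | hp | hp | hp <;> rw [hp] at hpf
    · rcases key2 f hpf with h | h | h
      exacts [absurd h hf1, absurd h hf2, absurd h hf3]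
    · rcases keyA f hf1 hf2 hf3 hpf with h | h
      exacts [Or.inr (Or.inr (Or.inr (Or.inl h))), Or.inr (Or.inr (Or.inr (Or.inr (Or.inl h))))]
    · rcases keyB f hf1 hf2 hf3 hpf with h | h
      exacts [Or.inr (Or.inr (Or.inr (Or.inl h))), Or.inr (Or.inr (Or.inr (Or.inr (Or.inr h))))]
    · rcases keyC f hf1 hf2 hf3 hpf with h | h
      exacts [Or.inr (Or.inr (Or.inr (Or.inr (Or.inl h)))), Or.inr (Or.inr (Or.inr (Or.inr (Or.inr h))))]

section
variable {V W : Type} {G : SimpleGraph V} {H : SimpleGraph W}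

/-- Image of an edge meeting exactly the first two edges of a triangle image. -/
lemma img_pair (φ : G.lineGraph ≃g H.lineGraph) {f f1 f2 f3 : G.edgeSet} {a b c : W}
    (hab : a ≠ b) (hac : a ≠ c) (hbc : b ≠ c)
    (i1 : (φ f1 : Sym2 W) = s(a, b)) (i2 : (φ f2 : Sym2 W) = s(b, c))
    (i3 : (φ f3 : Sym2 W) = s(a, c))
    (hne1 : f ≠ f1) (hne2 : f ≠ f2) (hne3 : f ≠ f3)
    (m1 : ∃ z, z ∈ (f : Sym2 V) ∧ z ∈ (f1 : Sym2 V))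
    (nm3 : ¬ ∃ z, z ∈ (f : Sym2 V) ∧ z ∈ (f3 : Sym2 V)) :
    ∃ y : W, (φ f : Sym2 W) = s(b, y) ∧ y ≠ a ∧ y ≠ b ∧ y ≠ c := by
  obtain ⟨w, hwf, hw1⟩ := (iso_meets_iff φ hne1).mpr m1
  rw [i1, Sym2.mem_iff] at hw1
  rcases hw1 with rfl | rfl
  · exfalso
    apply nm3
    refine (iso_meets_iff φ hne3).mp ⟨w, hwf, ?_⟩
    rw [i3]; exact Sym2.mem_mk_left ..
  · refine ⟨Sym2.Mem.other hwf, (Sym2.other_spec hwf).symm, ?_, ?_, ?_⟩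
    · intro h
      apply hne1
      apply EquivLike.injective φ (Subtype.ext ?_)
      rw [i1, ← Sym2.other_spec hwf, h, Sym2.eq_swap]
    · exact Sym2.other_ne (edge_nondiag (φ f)) hwf
    · intro h
      apply hne2
      apply EquivLike.injective φ (Subtype.ext ?_)
      rw [i2, ← Sym2.other_spec hwf, h]

end
section
variable {V W : Type} {G : SimpleGraph V} {H : SimpleGraph W}

/-- Spec for the induced vertex map. -/
def Spec (φ : G.lineGraph ≃g H.lineGraph) (u : V) (w : W) : Prop :=
  (∀ e : G.edgeSet, u ∈ (e : Sym2 V) → w ∈ (φ e : Sym2 W)) ∧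
  (∀ g : H.edgeSet, w ∈ (g : Sym2 W) → u ∈ (φ.symm g : Sym2 V))

lemma spec_symm (φ : G.lineGraph ≃g H.lineGraph) {u : V} {w : W} (h : Spec φ u w) :
    Spec φ.symm w u := by
  refine ⟨h.2, fun e he => ?_⟩
  have := h.1 e he
  simpa using this

lemma every_vertex_edge (hG : G.Connected) (e0 : G.edgeSet) (u : V) :
    ∃ e : G.edgeSet, u ∈ (e : Sym2 V) := by
  obtain ⟨p, q, hpq, hp⟩ := edge_endpoints e0
  refine vert_closure (A := {u | ∃ e : G.edgeSet, u ∈ (e : Sym2 V)}) hG (v0 := p)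
    ⟨e0, by rw [hp]; exact Sym2.mem_mk_left ..⟩ ?_ u
  intro p' q' hadj _
  exact ⟨⟨s(p', q'), G.mem_edgeSet.mpr hadj⟩, Sym2.mem_mk_right ..⟩

/-- In a connected graph with at least two edges, no edge has both endpoints of degree one. -/
lemma not_both_deg_one (hG : G.Connected) (h2 : ∃ e f : G.edgeSet, e ≠ f)
    {e : G.edgeSet} {u u' : V} (he : (e : Sym2 V) = s(u, u'))
    (hu : ∀ f : G.edgeSet, u ∈ (f : Sym2 V) → f = e) :
    ∃ f : G.edgeSet, f ≠ e ∧ u' ∈ (f : Sym2 V) := by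
  by_contra hcon
  push_neg at hcon
  have hu' : ∀ f : G.edgeSet, u' ∈ (f : Sym2 V) → f = e := by
    intro f hf
    by_contra hne
    exact (hcon f hne) hf
  have huu' : u ≠ u' := by
    intro h
    exact edge_nondiag e (by rw [he, h]; exact Sym2.mk_isDiag_iff.mpr rfl)
  have hA : ∀ z : V, z = u ∨ z = u' := by
    refine vert_closure (A := {z | z = u ∨ z = u'}) hG (v0 := u) (Or.inl rfl) ?_
    intro p q hadj hp
    set f : G.edgeSet := ⟨s(p, q), G.mem_edgeSet.mpr hadj⟩ with hf
    have hpf : p ∈ (f : Sym2 V) := Sym2.mem_mk_left ..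
    have hqf : q ∈ (f : Sym2 V) := Sym2.mem_mk_right ..
    have hfe : f = e := by
      rcases hp with hp | hp
      · exact hu f (hp ▸ hpf)
      · exact hu' f (hp ▸ hpf)
    have : q ∈ s(u, u') := by rw [← he, ← hfe]; exact hqf
    rw [Sym2.mem_iff] at this
    exact this
  obtain ⟨f1, f2, hne⟩ := h2
  apply hne
  have key : ∀ f : G.edgeSet, f = e := by
    intro f
    obtain ⟨p, q, hpq, hf⟩ := edge_endpoints f
    have hpf : p ∈ (f : Sym2 V) := by rw [hf]; exact Sym2.mem_mk_left ..
    have hqf : q ∈ (f : Sym2 V) := by rw [hf]; exact Sym2.mem_mk_right ..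
    rcases hA p with hp | hp
    · exact hu f (hp ▸ hpf)
    · exact hu' f (hp ▸ hpf)
  rw [key f1, key f2]

/-- Existence and uniqueness of the induced vertex map value. -/
lemma master (φ : G.lineGraph ≃g H.lineGraph) (hG : G.Connected)
    (h2 : ∃ e f : G.edgeSet, e ≠ f)
    (hgoodG : ∀ (v : V) (e1 e2 e3 : G.edgeSet), v ∈ (e1 : Sym2 V) → v ∈ (e2 : Sym2 V) →
      v ∈ (e3 : Sym2 V) → e1 ≠ e2 → e1 ≠ e3 → e2 ≠ e3 →
      ∃ w : W, w ∈ (φ e1 : Sym2 W) ∧ w ∈ (φ e2 : Sym2 W) ∧ w ∈ (φ e3 : Sym2 W))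
    (hgoodH : ∀ (w : W) (g1 g2 g3 : H.edgeSet), w ∈ (g1 : Sym2 W) → w ∈ (g2 : Sym2 W) →
      w ∈ (g3 : Sym2 W) → g1 ≠ g2 → g1 ≠ g3 → g2 ≠ g3 →
      ∃ v : V, v ∈ (φ.symm g1 : Sym2 V) ∧ v ∈ (φ.symm g2 : Sym2 V) ∧
        v ∈ (φ.symm g3 : Sym2 V)) (u : V) :
    ∃! w : W, Spec φ u w := by
  -- the two "clause" sublemmas, at a vertex of degree ≥ 2
  have S1 : ∀ (p : V) (e f : G.edgeSet), e ≠ f → p ∈ (e : Sym2 V) → p ∈ (f : Sym2 V) →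
      ∀ w : W, w ∈ (φ e : Sym2 W) → w ∈ (φ f : Sym2 W) →
      ∀ g : G.edgeSet, p ∈ (g : Sym2 V) → w ∈ (φ g : Sym2 W) := by
    intro p e f hef hpe hpf w hwe hwf g hpg
    by_cases hge : g = e
    · rw [hge]; exact hwe
    by_cases hgf : g = f
    · rw [hgf]; exact hwf
    obtain ⟨w', hw1, hw2, hw3⟩ := hgoodG p e f g hpe hpf hpg hef (Ne.symm hge) (Ne.symm hgf)
    have hne : φ e ≠ φ f := fun h => hef (EquivLike.injective φ h)
    have : w' = w := unique_shared hne hw1 hw2 hwe hwf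
    rwa [← this]
  have S2 : ∀ (p : V) (e f : G.edgeSet), e ≠ f → p ∈ (e : Sym2 V) → p ∈ (f : Sym2 V) →
      ∀ w : W, w ∈ (φ e : Sym2 W) → w ∈ (φ f : Sym2 W) →
      ∀ g : H.edgeSet, w ∈ (g : Sym2 W) → p ∈ (φ.symm g : Sym2 V) := by
    intro p e f hef hpe hpf w hwe hwf g hwg
    by_cases hge : g = φ e
    · rw [hge]; simpa using hpe
    by_cases hgf : g = φ f
    · rw [hgf]; simpa using hpf
    have hn1 : φ e ≠ g := Ne.symm hge
    have hn2 : φ f ≠ g := Ne.symm hgf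
    have hne : φ e ≠ φ f := fun h => hef (EquivLike.injective φ h)
    obtain ⟨v', hv1, hv2, hv3⟩ := hgoodH w (φ e) (φ f) g hwe hwf hwg hne hn1 hn2
    simp only [RelIso.symm_apply_apply] at hv1 hv2
    have : v' = p := unique_shared hef hv1 hv2 hpe hpf
    rwa [← this]
  obtain ⟨e, hue⟩ := every_vertex_edge hG h2.choose u
  by_cases hdeg : ∃ f : G.edgeSet, f ≠ e ∧ u ∈ (f : Sym2 V)
  · -- degree ≥ 2 case
    obtain ⟨f, hfe, huf⟩ := hdeg
    have hef : e ≠ f := Ne.symm hfe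
    have hadj : ∃ w, w ∈ (φ e : Sym2 W) ∧ w ∈ (φ f : Sym2 W) :=
      (iso_meets_iff φ hef).mpr ⟨u, hue, huf⟩
    obtain ⟨w, hwe, hwf⟩ := hadj
    refine ⟨w, ⟨S1 u e f hef hue huf w hwe hwf, S2 u e f hef hue huf w hwe hwf⟩, ?_⟩
    intro w' hw'
    have h1 := hw'.1 e hue
    have h2' := hw'.1 f huf
    have hne : φ e ≠ φ f := fun h => hef (EquivLike.injective φ h)
    exact unique_shared hne h1 h2' hwe hwf
  · -- degree 1 case
    push_neg at hdeg
    have hu1 : ∀ f : G.edgeSet, u ∈ (f : Sym2 V) → f = e := by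
      intro f hf
      by_contra hne
      exact hdeg f hne hf
    set u' := Sym2.Mem.other hue with hu'def
    have he : (e : Sym2 V) = s(u, u') := (Sym2.other_spec hue).symm
    have huu' : u' ≠ u := Sym2.other_ne (edge_nondiag e) hue
    have hu'e : u' ∈ (e : Sym2 V) := Sym2.other_mem hue
    obtain ⟨f, hfe, hu'f⟩ := not_both_deg_one hG h2 he hu1
    have hef : e ≠ f := Ne.symm hfe
    obtain ⟨w', hw'e, hw'f⟩ := (iso_meets_iff φ hef).mpr ⟨u', hu'e, hu'f⟩
    set w := Sym2.Mem.other hw'e with hwdef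
    have hw : (φ e : Sym2 W) = s(w', w) := (Sym2.other_spec hw'e).symm
    have hww' : w ≠ w' := Sym2.other_ne (edge_nondiag (φ e)) hw'e
    have hwmem : w ∈ (φ e : Sym2 W) := Sym2.other_mem hw'e
    have hS1u' := S1 u' e f hef hu'e hu'f w' hw'e hw'f
    refine ⟨w, ⟨?_, ?_⟩, ?_⟩
    · intro g hg
      rw [hu1 g hg]; exact hwmem
    · intro g hwg
      by_cases hge : g = φ e
      · rw [hge]; simpa using hue
      -- g shares w with φ e, so φ.symm g meets e
      have hne : φ e ≠ g := Ne.symm hge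
      have hmeet : ∃ z, z ∈ (e : Sym2 V) ∧ z ∈ (φ.symm g : Sym2 V) := by
        have := (iso_meets_iff φ (e := e) (f := φ.symm g) ?_).mp ?_
        · exact this
        · intro h; apply hne; rw [h]; simp
        · refine ⟨w, hwmem, ?_⟩; simpa using hwg
      obtain ⟨z, hze, hzg⟩ := hmeet
      rw [he, Sym2.mem_iff] at hze
      rcases hze with rfl | hz
      · exact hzg
      · exfalso
        have : w' ∈ (φ (φ.symm g) : Sym2 W) := hS1u' (φ.symm g) (hz ▸ hzg)
        rw [RelIso.apply_symm_apply] at this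
        have hgeq : (g : Sym2 W) = (φ e : Sym2 W) := by
          rw [hw]
          exact (Sym2.mem_and_mem_iff (Ne.symm hww')).mp ⟨this, hwg⟩
        exact hge (Subtype.ext hgeq)
    · -- uniqueness
      intro w₂ hw₂
      have hw₂e : w₂ ∈ (φ e : Sym2 W) := hw₂.1 e hue
      rw [hw, Sym2.mem_iff] at hw₂e
      rcases hw₂e with rfl | rfl
      · -- w₂ = w' is impossible: clause 2 with g = φ f
        exfalso
        have := hw₂.2 (φ f) hw'f
        rw [RelIso.symm_apply_apply] at this
        exact hfe (hu1 f this)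
      · rfl

end
section
variable {V W : Type} {G : SimpleGraph V} {H : SimpleGraph W}

lemma main_good (φ : G.lineGraph ≃g H.lineGraph) (hG : G.Connected) (hH : H.Connected)
    (h2 : ∃ e f : G.edgeSet, e ≠ f)
    (hgoodG : ∀ (v : V) (e1 e2 e3 : G.edgeSet), v ∈ (e1 : Sym2 V) → v ∈ (e2 : Sym2 V) →
      v ∈ (e3 : Sym2 V) → e1 ≠ e2 → e1 ≠ e3 → e2 ≠ e3 →
      ∃ w : W, w ∈ (φ e1 : Sym2 W) ∧ w ∈ (φ e2 : Sym2 W) ∧ w ∈ (φ e3 : Sym2 W))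
    (hgoodH : ∀ (w : W) (g1 g2 g3 : H.edgeSet), w ∈ (g1 : Sym2 W) → w ∈ (g2 : Sym2 W) →
      w ∈ (g3 : Sym2 W) → g1 ≠ g2 → g1 ≠ g3 → g2 ≠ g3 →
      ∃ v : V, v ∈ (φ.symm g1 : Sym2 V) ∧ v ∈ (φ.symm g2 : Sym2 V) ∧
        v ∈ (φ.symm g3 : Sym2 V)) :
    Nonempty (G ≃g H) := by
  have h2H : ∃ e f : H.edgeSet, e ≠ f := by
    obtain ⟨e, f, hef⟩ := h2
    exact ⟨φ e, φ f, fun h => hef (EquivLike.injective φ h)⟩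
  have hgoodG' : ∀ (v : V) (e1 e2 e3 : G.edgeSet), v ∈ (e1 : Sym2 V) → v ∈ (e2 : Sym2 V) →
      v ∈ (e3 : Sym2 V) → e1 ≠ e2 → e1 ≠ e3 → e2 ≠ e3 →
      ∃ w : W, w ∈ (φ.symm.symm e1 : Sym2 W) ∧ w ∈ (φ.symm.symm e2 : Sym2 W) ∧
        w ∈ (φ.symm.symm e3 : Sym2 W) := by
    simpa using hgoodG
  have mG := master φ hG h2 hgoodG hgoodH
  have mH := master φ.symm hH h2H hgoodH hgoodG'
  set ψ : V → W := fun u => (mG u).exists.choose with hψdef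
  have hψ : ∀ u, Spec φ u (ψ u) := fun u => (mG u).exists.choose_spec
  set χ : W → V := fun w => (mH w).exists.choose with hχdef
  have hχ : ∀ w, Spec φ.symm w (χ w) := fun w => (mH w).exists.choose_spec
  have hli : ∀ u, χ (ψ u) = u := by
    intro u
    exact ((mH (ψ u)).unique (hχ (ψ u)) (spec_symm φ (hψ u)))
  have hri : ∀ w, ψ (χ w) = w := by
    intro w
    have h1 : Spec φ (χ w) w := by
      have := spec_symm φ.symm (hχ w)
      refine ⟨fun e he => ?_, fun g hg => ?_⟩
      · have h := this.1 e he
        simpa using h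
      · have h := this.2 g hg
        simpa using h
    exact ((mG (χ w)).unique (hψ (χ w)) h1)
  have hinj : Function.Injective ψ := by
    intro u u' h
    rw [← hli u, ← hli u', h]
  refine ⟨⟨⟨ψ, χ, hli, hri⟩, ?_⟩⟩
  intro p q
  simp only [Equiv.coe_fn_mk]
  constructor
  · -- H.Adj (ψ p) (ψ q) → G.Adj p q
    intro hadj
    set g : H.edgeSet := ⟨s(ψ p, ψ q), H.mem_edgeSet.mpr hadj⟩ with hgdef
    have hp : p ∈ (φ.symm g : Sym2 V) := (hψ p).2 g (Sym2.mem_mk_left ..)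
    have hq : q ∈ (φ.symm g : Sym2 V) := (hψ q).2 g (Sym2.mem_mk_right ..)
    have hpq : p ≠ q := fun h => hadj.ne (by rw [h])
    have heq : (φ.symm g : Sym2 V) = s(p, q) := (Sym2.mem_and_mem_iff hpq).mp ⟨hp, hq⟩
    have hmem := (φ.symm g).2
    rw [heq] at hmem
    exact G.mem_edgeSet.mp hmem
  · -- G.Adj p q → H.Adj (ψ p) (ψ q)
    intro hadj
    set e : G.edgeSet := ⟨s(p, q), G.mem_edgeSet.mpr hadj⟩ with hedef
    have hp : ψ p ∈ (φ e : Sym2 W) := (hψ p).1 e (Sym2.mem_mk_left ..)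
    have hq : ψ q ∈ (φ e : Sym2 W) := (hψ q).1 e (Sym2.mem_mk_right ..)
    have hpq : ψ p ≠ ψ q := fun h => hadj.ne (hinj h)
    have heq : (φ e : Sym2 W) = s(ψ p, ψ q) := (Sym2.mem_and_mem_iff hpq).mp ⟨hp, hq⟩
    have := (φ e).2
    rw [heq] at this
    exact H.mem_edgeSet.mp this

end
section
variable {V W : Type} {G : SimpleGraph V} {H : SimpleGraph W}

/-- Bad case with an extra edge: both graphs live on 4 vertices and are isomorphic. -/
lemma core (φ : G.lineGraph ≃g H.lineGraph) (hG : G.Connected) (hH : H.Connected)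
    {v x1 x2 x3 : V} (h12 : x1 ≠ x2) (h13 : x1 ≠ x3) (h23 : x2 ≠ x3)
    {e1 e2 e3 f : G.edgeSet}
    (he1 : (e1 : Sym2 V) = s(v, x1)) (he2 : (e2 : Sym2 V) = s(v, x2))
    (he3 : (e3 : Sym2 V) = s(v, x3)) (hfeq : (f : Sym2 V) = s(x1, x2))
    {a b c : W} (hab : a ≠ b) (hac : a ≠ c) (hbc : b ≠ c)
    (i1 : (φ e1 : Sym2 W) = s(a, b)) (i2 : (φ e2 : Sym2 W) = s(b, c))
    (i3 : (φ e3 : Sym2 W) = s(a, c))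
    (C1 : ∀ u : V, u = v ∨ u = x1 ∨ u = x2 ∨ u = x3)
    (C2 : ∀ g : G.edgeSet, (g : Sym2 V) = s(v, x1) ∨ (g : Sym2 V) = s(v, x2) ∨
      (g : Sym2 V) = s(v, x3) ∨ (g : Sym2 V) = s(x1, x2) ∨ (g : Sym2 V) = s(x1, x3) ∨
      (g : Sym2 V) = s(x2, x3)) :
    Nonempty (G ≃g H) := by
  have hv1 : v ≠ x1 := by
    intro h; exact edge_nondiag e1 (by rw [he1, ← h]; exact Sym2.mk_isDiag_iff.mpr rfl)
  have hv2 : v ≠ x2 := by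
    intro h; exact edge_nondiag e2 (by rw [he2, ← h]; exact Sym2.mk_isDiag_iff.mpr rfl)
  have hv3 : v ≠ x3 := by
    intro h; exact edge_nondiag e3 (by rw [he3, ← h]; exact Sym2.mk_isDiag_iff.mpr rfl)
  have hvf : v ∉ (f : Sym2 V) := by
    rw [hfeq, Sym2.mem_iff]; rintro (h | h); exacts [hv1 h, hv2 h]
  have hfne1 : f ≠ e1 := by
    intro h; exact hvf (by rw [h, he1]; exact Sym2.mem_mk_left ..)
  have hfne2 : f ≠ e2 := by
    intro h; exact hvf (by rw [h, he2]; exact Sym2.mem_mk_left ..)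
  have hfne3 : f ≠ e3 := by
    intro h; exact hvf (by rw [h, he3]; exact Sym2.mem_mk_left ..)
  have m1 : ∃ z, z ∈ (f : Sym2 V) ∧ z ∈ (e1 : Sym2 V) :=
    ⟨x1, by rw [hfeq]; exact Sym2.mem_mk_left .., by rw [he1]; exact Sym2.mem_mk_right ..⟩
  have nm3 : ¬ ∃ z, z ∈ (f : Sym2 V) ∧ z ∈ (e3 : Sym2 V) := by
    rintro ⟨z, hzf, hze⟩
    rw [hfeq, Sym2.mem_iff] at hzf
    rw [he3, Sym2.mem_iff] at hze
    rcases hzf with rfl | rfl <;> rcases hze with h | h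
    exacts [hv1 h.symm, h13 h, hv2 h.symm, h23 h]
  obtain ⟨y, imgf, hya, hyb, hyc⟩ := img_pair φ hab hac hbc i1 i2 i3 hfne1 hfne2 hfne3 m1 nm3
  -- apply struct to H at vertex b
  have i1' : (φ e1 : Sym2 W) = s(b, a) := by rw [i1, Sym2.eq_swap]
  have hbadH : ¬ ∃ z : V, z ∈ (φ.symm (φ e1) : Sym2 V) ∧ z ∈ (φ.symm (φ e2) : Sym2 V) ∧
      z ∈ (φ.symm (φ f) : Sym2 V) := by
    simp only [RelIso.symm_apply_apply]
    rintro ⟨z, hz1, hz2, hzf⟩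
    rw [he1, Sym2.mem_iff] at hz1
    rw [he2, Sym2.mem_iff] at hz2
    have hzv : z = v := by
      rcases hz1 with rfl | rfl
      · rfl
      · rcases hz2 with h | h
        exacts [absurd h.symm hv1, absurd h h12]
    exact hvf (hzv ▸ hzf)
  obtain ⟨D1, D2, -⟩ := struct φ.symm hH (v := b) (x1 := a) (x2 := c) (x3 := y)
    hac (Ne.symm hya) (Ne.symm hyc) i1' i2 imgf hbadH
  -- adjacency facts
  have ha1 : G.Adj v x1 := G.mem_edgeSet.mp (he1 ▸ e1.2)
  have ha2 : G.Adj v x2 := G.mem_edgeSet.mp (he2 ▸ e2.2)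
  have ha3 : G.Adj v x3 := G.mem_edgeSet.mp (he3 ▸ e3.2)
  have haf : G.Adj x1 x2 := G.mem_edgeSet.mp (hfeq ▸ f.2)
  have hHba : H.Adj b a := (H.mem_edgeSet.mp (i1 ▸ (φ e1).2)).symm
  have hHbc : H.Adj b c := H.mem_edgeSet.mp (i2 ▸ (φ e2).2)
  have hHby : H.Adj b y := H.mem_edgeSet.mp (imgf ▸ (φ f).2)
  have hHac : H.Adj a c := H.mem_edgeSet.mp (i3 ▸ (φ e3).2)
  -- image of s(x1,x3) if present
  have img13 : ∀ g : G.edgeSet, (g : Sym2 V) = s(x1, x3) →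
      ∃ y' : W, (φ g : Sym2 W) = s(a, y') ∧ y' ≠ b ∧ y' ≠ a ∧ y' ≠ c := by
    intro g hg
    have hx3g : x3 ∈ (g : Sym2 V) := by rw [hg]; exact Sym2.mem_mk_right ..
    have hgne1 : g ≠ e1 := by
      intro h
      have : x3 ∈ s(v, x1) := by rw [← he1, ← h]; exact hx3g
      rw [Sym2.mem_iff] at this
      rcases this with h' | h'; exacts [hv3 h'.symm, h13 h'.symm]
    have hgne2 : g ≠ e2 := by
      intro h
      have : x3 ∈ s(v, x2) := by rw [← he2, ← h]; exact hx3g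
      rw [Sym2.mem_iff] at this
      rcases this with h' | h'; exacts [hv3 h'.symm, h23 h'.symm]
    have hgne3 : g ≠ e3 := by
      intro h
      have : x1 ∈ s(v, x3) := by rw [← he3, ← h, hg]; exact Sym2.mem_mk_left ..
      rw [Sym2.mem_iff] at this
      rcases this with h' | h'; exacts [hv1 h'.symm, h13 h']
    have m1' : ∃ z, z ∈ (g : Sym2 V) ∧ z ∈ (e1 : Sym2 V) :=
      ⟨x1, by rw [hg]; exact Sym2.mem_mk_left .., by rw [he1]; exact Sym2.mem_mk_right ..⟩
    have nm3' : ¬ ∃ z, z ∈ (g : Sym2 V) ∧ z ∈ (e2 : Sym2 V) := by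
      rintro ⟨z, hzg, hze⟩
      rw [hg, Sym2.mem_iff] at hzg
      rw [he2, Sym2.mem_iff] at hze
      rcases hzg with rfl | rfl <;> rcases hze with h | h
      exacts [hv1 h.symm, h12 h, hv3 h.symm, h23 h.symm]
    obtain ⟨y', h1, h2, h3, h4⟩ := img_pair φ (Ne.symm hab) hbc hac
      (by rw [i1, Sym2.eq_swap]) i3 i2 hgne1 hgne3 hgne2 m1' nm3'
    exact ⟨y', h1, h2, h3, h4⟩
  have img23 : ∀ g : G.edgeSet, (g : Sym2 V) = s(x2, x3) →
      ∃ y' : W, (φ g : Sym2 W) = s(c, y') ∧ y' ≠ b ∧ y' ≠ c ∧ y' ≠ a := by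
    intro g hg
    have hx3g : x3 ∈ (g : Sym2 V) := by rw [hg]; exact Sym2.mem_mk_right ..
    have hgne1 : g ≠ e1 := by
      intro h
      have : x3 ∈ s(v, x1) := by rw [← he1, ← h]; exact hx3g
      rw [Sym2.mem_iff] at this
      rcases this with h' | h'; exacts [hv3 h'.symm, h13 h'.symm]
    have hgne2 : g ≠ e2 := by
      intro h
      have : x3 ∈ s(v, x2) := by rw [← he2, ← h]; exact hx3g
      rw [Sym2.mem_iff] at this
      rcases this with h' | h'; exacts [hv3 h'.symm, h23 h'.symm]
    have hgne3 : g ≠ e3 := by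
      intro h
      have : x2 ∈ s(v, x3) := by rw [← he3, ← h, hg]; exact Sym2.mem_mk_left ..
      rw [Sym2.mem_iff] at this
      rcases this with h' | h'; exacts [hv2 h'.symm, h23 h']
    have m1' : ∃ z, z ∈ (g : Sym2 V) ∧ z ∈ (e2 : Sym2 V) :=
      ⟨x2, by rw [hg]; exact Sym2.mem_mk_left .., by rw [he2]; exact Sym2.mem_mk_right ..⟩
    have nm3' : ¬ ∃ z, z ∈ (g : Sym2 V) ∧ z ∈ (e1 : Sym2 V) := by
      rintro ⟨z, hzg, hze⟩
      rw [hg, Sym2.mem_iff] at hzg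
      rw [he1, Sym2.mem_iff] at hze
      rcases hzg with rfl | rfl <;> rcases hze with h | h
      exacts [hv2 h.symm, h12 h.symm, hv3 h.symm, h13 h.symm]
    obtain ⟨y', h1, h2, h3, h4⟩ := img_pair φ hbc (Ne.symm hab) (Ne.symm hac)
      i2 (by rw [i3, Sym2.eq_swap]) (by rw [i1, Sym2.eq_swap]) hgne2 hgne3 hgne1 m1' nm3'
    exact ⟨y', h1, h2, h3, h4⟩
  -- the two conditional edges
  have hx13 : G.Adj x1 x3 ↔ H.Adj a y := by
    constructor
    · intro hadj
      set g : G.edgeSet := ⟨s(x1, x3), G.mem_edgeSet.mpr hadj⟩ with hgdef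
      obtain ⟨y', h1, h2, h3, h4⟩ := img13 g rfl
      have : y' = y := by
        rcases D1 y' with h | h | h | h
        exacts [absurd h h2, absurd h h3, absurd h h4, h]
      rw [this] at h1
      exact H.mem_edgeSet.mp (h1 ▸ (φ g).2)
    · intro hadj
      set g : H.edgeSet := ⟨s(a, y), H.mem_edgeSet.mpr hadj⟩ with hgdef
      set e' : G.edgeSet := φ.symm g with he'def
      have himg : (φ e' : Sym2 W) = s(a, y) := by rw [he'def, RelIso.apply_symm_apply]
      rcases C2 e' with h | h | h | h | h | h
      · exfalso
        have : e' = e1 := Subtype.ext (h.trans he1.symm)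
        rw [this, i1] at himg
        rw [Sym2.eq_iff] at himg
        rcases himg with ⟨-, h'⟩ | ⟨h', -⟩; exacts [hyb h'.symm, hya h'.symm]
      · exfalso
        have : e' = e2 := Subtype.ext (h.trans he2.symm)
        rw [this, i2] at himg
        rw [Sym2.eq_iff] at himg
        rcases himg with ⟨h', -⟩ | ⟨-, h'⟩; exacts [hab h'.symm, hac h'.symm]
      · exfalso
        have : e' = e3 := Subtype.ext (h.trans he3.symm)
        rw [this, i3] at himg
        rw [Sym2.eq_iff] at himg
        rcases himg with ⟨-, h'⟩ | ⟨h', -⟩; exacts [hyc h'.symm, hya h'.symm]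
      · exfalso
        have : e' = f := Subtype.ext (h.trans hfeq.symm)
        rw [this, imgf] at himg
        rw [Sym2.eq_iff] at himg
        rcases himg with ⟨h', -⟩ | ⟨h', -⟩; exacts [hab h'.symm, hyb h'.symm]
      · exact G.mem_edgeSet.mp (h ▸ e'.2)
      · exfalso
        obtain ⟨y', h1, h2, h3, h4⟩ := img23 e' h
        rw [himg] at h1
        rw [Sym2.eq_iff] at h1
        rcases h1 with ⟨h', -⟩ | ⟨-, h'⟩; exacts [hac h', hyc h']
  have hx23 : G.Adj x2 x3 ↔ H.Adj c y := by
    constructor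
    · intro hadj
      set g : G.edgeSet := ⟨s(x2, x3), G.mem_edgeSet.mpr hadj⟩ with hgdef
      obtain ⟨y', h1, h2, h3, h4⟩ := img23 g rfl
      have : y' = y := by
        rcases D1 y' with h | h | h | h
        exacts [absurd h h2, absurd h h4, absurd h h3, h]
      rw [this] at h1
      exact H.mem_edgeSet.mp (h1 ▸ (φ g).2)
    · intro hadj
      set g : H.edgeSet := ⟨s(c, y), H.mem_edgeSet.mpr hadj⟩ with hgdef
      set e' : G.edgeSet := φ.symm g with he'def
      have himg : (φ e' : Sym2 W) = s(c, y) := by rw [he'def, RelIso.apply_symm_apply]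
      rcases C2 e' with h | h | h | h | h | h
      · exfalso
        have : e' = e1 := Subtype.ext (h.trans he1.symm)
        rw [this, i1] at himg
        rw [Sym2.eq_iff] at himg
        rcases himg with ⟨h', -⟩ | ⟨-, h'⟩; exacts [hac h', hbc h']
      · exfalso
        have : e' = e2 := Subtype.ext (h.trans he2.symm)
        rw [this, i2] at himg
        rw [Sym2.eq_iff] at himg
        rcases himg with ⟨h', -⟩ | ⟨h', -⟩; exacts [hbc h', hyb h'.symm]
      · exfalso
        have : e' = e3 := Subtype.ext (h.trans he3.symm)
        rw [this, i3] at himg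
        rw [Sym2.eq_iff] at himg
        rcases himg with ⟨h', -⟩ | ⟨h', -⟩; exacts [hac h', hya h'.symm]
      · exfalso
        have : e' = f := Subtype.ext (h.trans hfeq.symm)
        rw [this, imgf] at himg
        rw [Sym2.eq_iff] at himg
        rcases himg with ⟨h', -⟩ | ⟨h', -⟩; exacts [hbc h', hyb h'.symm]
      · exfalso
        obtain ⟨y', h1, h2, h3, h4⟩ := img13 e' h
        rw [himg] at h1
        rw [Sym2.eq_iff] at h1
        rcases h1 with ⟨h', -⟩ | ⟨-, h'⟩; exacts [hac h'.symm, hya h']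
      · exact G.mem_edgeSet.mp (h ▸ e'.2)
  -- build the isomorphism
  obtain ⟨E, hEv, hE1, hE2, hE3⟩ := exists_equiv_four v x1 x2 x3 b a c y
    hv1 hv2 hv3 h12 h13 h23
    (Ne.symm hab) hbc (Ne.symm hyb) hac (Ne.symm hya) (Ne.symm hyc)
    C1 D1
  refine ⟨⟨E, ?_⟩⟩
  intro p q
  rcases C1 p with hp | hp | hp | hp <;> rcases C1 q with hq | hq | hq | hq <;>
    rw [hp, hq] <;> simp only [hEv, hE1, hE2, hE3] <;>
    first
      | simp
      | exact iff_of_true hHba ha1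
      | exact iff_of_true hHba.symm ha1.symm
      | exact iff_of_true hHbc ha2
      | exact iff_of_true hHbc.symm ha2.symm
      | exact iff_of_true hHby ha3
      | exact iff_of_true hHby.symm ha3.symm
      | exact iff_of_true hHac haf
      | exact iff_of_true hHac.symm haf.symm
      | exact hx13.symm
      | exact hx23.symm
      | (rw [H.adj_comm, G.adj_comm]; exact hx13.symm)
      | (rw [H.adj_comm, G.adj_comm]; exact hx23.symm)

end
section
variable {V W : Type} {G : SimpleGraph V} {H : SimpleGraph W}

lemma main_bad (φ : G.lineGraph ≃g H.lineGraph) (hG : G.Connected) (hH : H.Connected)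
    {v : V} {e1 e2 e3 : G.edgeSet}
    (hv1 : v ∈ (e1 : Sym2 V)) (hv2 : v ∈ (e2 : Sym2 V)) (hv3 : v ∈ (e3 : Sym2 V))
    (n12 : e1 ≠ e2) (n13 : e1 ≠ e3) (n23 : e2 ≠ e3)
    (hbad : ¬ ∃ w : W, w ∈ (φ e1 : Sym2 W) ∧ w ∈ (φ e2 : Sym2 W) ∧ w ∈ (φ e3 : Sym2 W)) :
    Nonempty (G ≃g H) ∨
      (Nonempty (G ≃g completeBipartiteGraph (Fin 1) (Fin 3)) ∧
        Nonempty (H ≃g (⊤ : SimpleGraph (Fin 3)))) := by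
  set x1 := Sym2.Mem.other hv1 with hx1def
  set x2 := Sym2.Mem.other hv2 with hx2def
  set x3 := Sym2.Mem.other hv3 with hx3def
  have he1 : (e1 : Sym2 V) = s(v, x1) := (Sym2.other_spec hv1).symm
  have he2 : (e2 : Sym2 V) = s(v, x2) := (Sym2.other_spec hv2).symm
  have he3 : (e3 : Sym2 V) = s(v, x3) := (Sym2.other_spec hv3).symm
  have h12 : x1 ≠ x2 := by
    intro h; exact n12 (Subtype.ext (by rw [he1, he2, h]))
  have h13 : x1 ≠ x3 := by
    intro h; exact n13 (Subtype.ext (by rw [he1, he3, h]))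
  have h23 : x2 ≠ x3 := by
    intro h; exact n23 (Subtype.ext (by rw [he2, he3, h]))
  obtain ⟨C1, C2, a, b, c, hab, hac, hbc, i1, i2, i3⟩ :=
    struct φ hG h12 h13 h23 he1 he2 he3 hbad
  by_cases hS : ∃ f : G.edgeSet, (f : Sym2 V) = s(x1, x2) ∨ (f : Sym2 V) = s(x1, x3) ∨
      (f : Sym2 V) = s(x2, x3)
  · left
    obtain ⟨f, hf⟩ := hS
    rcases hf with hf | hf | hf
    · exact core φ hG hH h12 h13 h23 he1 he2 he3 hf hab hac hbc i1 i2 i3 C1 C2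
    · -- relabel (x1, x3, x2), (b, a, c)
      refine core φ hG hH h13 h12 (Ne.symm h23) he1 he3 he2 hf
        (Ne.symm hab) hbc hac (by rw [i1, Sym2.eq_swap]) i3 i2 ?_ ?_
      · intro u; rcases C1 u with h | h | h | h <;> tauto
      · intro g
        rcases C2 g with h | h | h | h | h | h
        · exact Or.inl h
        · exact Or.inr (Or.inr (Or.inl h))
        · exact Or.inr (Or.inl h)
        · exact Or.inr (Or.inr (Or.inr (Or.inr (Or.inl h))))
        · exact Or.inr (Or.inr (Or.inr (Or.inl h)))
        · exact Or.inr (Or.inr (Or.inr (Or.inr (Or.inr (by rw [h, Sym2.eq_swap])))))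
    · -- relabel (x2, x3, x1), (b, c, a)
      refine core φ hG hH h23 (Ne.symm h12) (Ne.symm h13) he2 he3 he1 hf
        hbc (Ne.symm hab) (Ne.symm hac) i2 (by rw [i3, Sym2.eq_swap])
        (by rw [i1, Sym2.eq_swap]) ?_ ?_
      · intro u; rcases C1 u with h | h | h | h <;> tauto
      · intro g
        rcases C2 g with h | h | h | h | h | h
        · exact Or.inr (Or.inr (Or.inl h))
        · exact Or.inl h
        · exact Or.inr (Or.inl h)
        · exact Or.inr (Or.inr (Or.inr (Or.inr (Or.inl (by rw [h, Sym2.eq_swap])))))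
        · exact Or.inr (Or.inr (Or.inr (Or.inr (Or.inr (by rw [h, Sym2.eq_swap])))))
        · exact Or.inr (Or.inr (Or.inr (Or.inl h)))
  · -- G is the star K_{1,3} and H is the triangle K_3
    right
    push_neg at hS
    have honly : ∀ f : G.edgeSet, f = e1 ∨ f = e2 ∨ f = e3 := by
      intro f
      rcases C2 f with h | h | h | h | h | h
      · exact Or.inl (Subtype.ext (h.trans he1.symm))
      · exact Or.inr (Or.inl (Subtype.ext (h.trans he2.symm)))
      · exact Or.inr (Or.inr (Subtype.ext (h.trans he3.symm)))
      · exact absurd h (hS f).1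
      · exact absurd h (hS f).2.1
      · exact absurd h (hS f).2.2
    have hv1' : v ≠ x1 := by
      intro h; exact edge_nondiag e1 (by rw [he1, ← h]; exact Sym2.mk_isDiag_iff.mpr rfl)
    have hv2' : v ≠ x2 := by
      intro h; exact edge_nondiag e2 (by rw [he2, ← h]; exact Sym2.mk_isDiag_iff.mpr rfl)
    have hv3' : v ≠ x3 := by
      intro h; exact edge_nondiag e3 (by rw [he3, ← h]; exact Sym2.mk_isDiag_iff.mpr rfl)
    have hnadj : ∀ p q : V, p ≠ v → q ≠ v → ¬ G.Adj p q := by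
      intro p q hp hq hadj
      set f : G.edgeSet := ⟨s(p, q), G.mem_edgeSet.mpr hadj⟩ with hfdef
      have hvf : v ∈ (f : Sym2 V) := by
        rcases honly f with h | h | h
        · rw [h, he1]; exact Sym2.mem_mk_left ..
        · rw [h, he2]; exact Sym2.mem_mk_left ..
        · rw [h, he3]; exact Sym2.mem_mk_left ..
      rw [Sym2.mem_iff] at hvf
      rcases hvf with h | h; exacts [hp h.symm, hq h.symm]
    have ha1 : G.Adj v x1 := G.mem_edgeSet.mp (he1 ▸ e1.2)
    have ha2 : G.Adj v x2 := G.mem_edgeSet.mp (he2 ▸ e2.2)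
    have ha3 : G.Adj v x3 := G.mem_edgeSet.mp (he3 ▸ e3.2)
    constructor
    · -- G ≃g K_{1,3}
      obtain ⟨E, hEv, hE1, hE2, hE3⟩ := exists_equiv_four v x1 x2 x3
        (Sum.inl 0 : Fin 1 ⊕ Fin 3) (Sum.inr 0) (Sum.inr 1) (Sum.inr 2)
        hv1' hv2' hv3' h12 h13 h23
        (by decide) (by decide) (by decide) (by decide) (by decide) (by decide)
        C1 (by decide)
      refine ⟨⟨E, ?_⟩⟩
      intro p q
      rcases C1 p with hp | hp | hp | hp <;> rcases C1 q with hq | hq | hq | hq <;>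
        rw [hp, hq] <;> simp only [hEv, hE1, hE2, hE3] <;>
        first
          | exact iff_of_true (by simp) ha1
          | exact iff_of_true (by simp) ha1.symm
          | exact iff_of_true (by simp) ha2
          | exact iff_of_true (by simp) ha2.symm
          | exact iff_of_true (by simp) ha3
          | exact iff_of_true (by simp) ha3.symm
          | exact iff_of_false (by simp) (hnadj _ _ (Ne.symm hv1') (Ne.symm hv2'))
          | exact iff_of_false (by simp) (hnadj _ _ (Ne.symm hv2') (Ne.symm hv1'))
          | exact iff_of_false (by simp) (hnadj _ _ (Ne.symm hv1') (Ne.symm hv3'))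
          | exact iff_of_false (by simp) (hnadj _ _ (Ne.symm hv3') (Ne.symm hv1'))
          | exact iff_of_false (by simp) (hnadj _ _ (Ne.symm hv2') (Ne.symm hv3'))
          | exact iff_of_false (by simp) (hnadj _ _ (Ne.symm hv3') (Ne.symm hv2'))
          | simp
    · -- H ≃g K_3
      have honlyH : ∀ g : H.edgeSet, (g : Sym2 W) = s(a, b) ∨ (g : Sym2 W) = s(b, c) ∨
          (g : Sym2 W) = s(a, c) := by
        intro g
        rcases honly (φ.symm g) with h | h | h
        · left
          rw [← i1, ← h, RelIso.apply_symm_apply]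
        · right; left
          rw [← i2, ← h, RelIso.apply_symm_apply]
        · right; right
          rw [← i3, ← h, RelIso.apply_symm_apply]
      have D1 : ∀ w : W, w = a ∨ w = b ∨ w = c := by
        refine vert_closure (A := {w : W | w = a ∨ w = b ∨ w = c}) hH (v0 := a)
          (Or.inl rfl) ?_
        intro p q hadj _
        set g : H.edgeSet := ⟨s(p, q), H.mem_edgeSet.mpr hadj⟩ with hgdef
        have hq : q ∈ (g : Sym2 W) := Sym2.mem_mk_right ..
        rcases honlyH g with h | h | h <;> rw [h, Sym2.mem_iff] at hq <;>
          rcases hq with rfl | rfl <;> tauto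
      have hHab : H.Adj a b := H.mem_edgeSet.mp (i1 ▸ (φ e1).2)
      have hHbc : H.Adj b c := H.mem_edgeSet.mp (i2 ▸ (φ e2).2)
      have hHac : H.Adj a c := H.mem_edgeSet.mp (i3 ▸ (φ e3).2)
      obtain ⟨E, hEa, hEb, hEc⟩ := exists_equiv_three a b c (0 : Fin 3) 1 2
        hab hac hbc (by decide) (by decide) (by decide) D1 (by decide)
      refine ⟨⟨E, ?_⟩⟩
      intro p q
      rcases D1 p with hp | hp | hp <;> rcases D1 q with hq | hq | hq <;>
        rw [hp, hq] <;> simp only [hEa, hEb, hEc] <;>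
        first
          | exact iff_of_true (by simp [top_adj]) hHab
          | exact iff_of_true (by simp [top_adj]) hHab.symm
          | exact iff_of_true (by simp [top_adj]) hHbc
          | exact iff_of_true (by simp [top_adj]) hHbc.symm
          | exact iff_of_true (by simp [top_adj]) hHac
          | exact iff_of_true (by simp [top_adj]) hHac.symm
          | simp

end
section
variable {V W : Type} {G : SimpleGraph V} {H : SimpleGraph W}

lemma no_edge_iso (φ : G.lineGraph ≃g H.lineGraph) (hG : G.Connected) (hH : H.Connected)
    (hempty : ¬ Nonempty G.edgeSet) : Nonempty (G ≃g H) := by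
  have hemptyH : ¬ Nonempty H.edgeSet := fun ⟨g⟩ => hempty ⟨φ.symm g⟩
  obtain ⟨v0⟩ := hG.nonempty
  obtain ⟨w0⟩ := hH.nonempty
  have hA : ∀ z : V, z = v0 := by
    refine vert_closure (A := {z : V | z = v0}) hG (v0 := v0) rfl ?_
    intro p q hadj _
    exact absurd ⟨⟨s(p, q), G.mem_edgeSet.mpr hadj⟩⟩ hempty
  have hB : ∀ z : W, z = w0 := by
    refine vert_closure (A := {z : W | z = w0}) hH (v0 := w0) rfl ?_
    intro p q hadj _
    exact absurd ⟨⟨s(p, q), H.mem_edgeSet.mpr hadj⟩⟩ hemptyH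
  refine ⟨⟨⟨fun _ => w0, fun _ => v0, fun z => (hA z).symm, fun z => (hB z).symm⟩, ?_⟩⟩
  intro p q
  simp only [Equiv.coe_fn_mk]
  refine iff_of_false H.irrefl fun h => hempty ⟨⟨s(p, q), G.mem_edgeSet.mpr h⟩⟩

lemma single_edge_iso (φ : G.lineGraph ≃g H.lineGraph) (hG : G.Connected) (hH : H.Connected)
    (e0 : G.edgeSet) (honly : ∀ e : G.edgeSet, e = e0) : Nonempty (G ≃g H) := by
  obtain ⟨u, u', huu', he0⟩ := edge_endpoints e0
  have honlyH : ∀ g : H.edgeSet, g = φ e0 := by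
    intro g
    have := honly (φ.symm g)
    have := congrArg φ this
    rwa [RelIso.apply_symm_apply] at this
  obtain ⟨z, z', hzz', hg0⟩ := edge_endpoints (φ e0)
  have hA : ∀ p : V, p = u ∨ p = u' := by
    refine vert_closure (A := {p : V | p = u ∨ p = u'}) hG (v0 := u) (Or.inl rfl) ?_
    intro p q hadj _
    have : (⟨s(p, q), G.mem_edgeSet.mpr hadj⟩ : G.edgeSet) = e0 := honly _
    have hq : q ∈ s(u, u') := by
      rw [← he0, ← this]
      exact Sym2.mem_mk_right ..
    rw [Sym2.mem_iff] at hq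
    exact hq
  have hB : ∀ p : W, p = z ∨ p = z' := by
    refine vert_closure (A := {p : W | p = z ∨ p = z'}) hH (v0 := z) (Or.inl rfl) ?_
    intro p q hadj _
    have : (⟨s(p, q), H.mem_edgeSet.mpr hadj⟩ : H.edgeSet) = φ e0 := honlyH _
    have hq : q ∈ s(z, z') := by
      rw [← hg0, ← this]
      exact Sym2.mem_mk_right ..
    rw [Sym2.mem_iff] at hq
    exact hq
  have hnadj : ∀ p q : V, G.Adj p q → s(p, q) = s(u, u') := by
    intro p q hadj
    have : (⟨s(p, q), G.mem_edgeSet.mpr hadj⟩ : G.edgeSet) = e0 := honly _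
    rw [← he0, ← this]
  obtain ⟨E, hEu, hEu'⟩ := exists_equiv_two u u' z z' huu'.ne hzz'.ne hA hB
  refine ⟨⟨E, ?_⟩⟩
  intro p q
  rcases hA p with hp | hp <;> rcases hA q with hq | hq <;>
    rw [hp, hq] <;> simp only [hEu, hEu'] <;>
    first
      | exact iff_of_true hzz' huu'
      | exact iff_of_true hzz'.symm huu'.symm
      | simp

end

end WhitneyAux

open WhitneyAux in
/-- Whitney's theorem: connected graphs with isomorphic line graphs are isomorphic,
    unless one is K₃ and the other is K_{1,3}. -/
theorem whitney {V W : Type} (G : SimpleGraph V) (H : SimpleGraph W)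
    (hG : G.Connected) (hH : H.Connected)
    (h : Nonempty (G.lineGraph ≃g H.lineGraph)) :
    Nonempty (G ≃g H) ∨
      (Nonempty (G ≃g (⊤ : SimpleGraph (Fin 3))) ∧
        Nonempty (H ≃g completeBipartiteGraph (Fin 1) (Fin 3))) ∨
      (Nonempty (G ≃g completeBipartiteGraph (Fin 1) (Fin 3)) ∧
        Nonempty (H ≃g (⊤ : SimpleGraph (Fin 3)))) := by
  obtain ⟨φ⟩ := h
  by_cases h2 : ∃ e f : G.edgeSet, e ≠ f
  · by_cases hgoodG : ∀ (v : V) (e1 e2 e3 : G.edgeSet), v ∈ (e1 : Sym2 V) →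
        v ∈ (e2 : Sym2 V) → v ∈ (e3 : Sym2 V) → e1 ≠ e2 → e1 ≠ e3 → e2 ≠ e3 →
        ∃ w : W, w ∈ (φ e1 : Sym2 W) ∧ w ∈ (φ e2 : Sym2 W) ∧ w ∈ (φ e3 : Sym2 W)
    · by_cases hgoodH : ∀ (w : W) (g1 g2 g3 : H.edgeSet), w ∈ (g1 : Sym2 W) →
          w ∈ (g2 : Sym2 W) → w ∈ (g3 : Sym2 W) → g1 ≠ g2 → g1 ≠ g3 → g2 ≠ g3 →
          ∃ v : V, v ∈ (φ.symm g1 : Sym2 V) ∧ v ∈ (φ.symm g2 : Sym2 V) ∧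
            v ∈ (φ.symm g3 : Sym2 V)
      · exact Or.inl (main_good φ hG hH h2 hgoodG hgoodH)
      · push_neg at hgoodH
        obtain ⟨w, g1, g2, g3, m1, m2, m3, n12, n13, n23, hb⟩ := hgoodH
        rcases main_bad φ.symm hH hG m1 m2 m3 n12 n13 n23 (by push_neg; exact hb)
          with ⟨iso⟩ | ⟨hx, hy⟩
        · exact Or.inl ⟨iso.some.symm⟩
        · exact Or.inr (Or.inl ⟨hy, hx⟩)
    · push_neg at hgoodG
      obtain ⟨v, e1, e2, e3, m1, m2, m3, n12, n13, n23, hb⟩ := hgoodG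
      rcases main_bad φ hG hH m1 m2 m3 n12 n13 n23 (by push_neg; exact hb)
        with iso | ⟨hx, hy⟩
      · exact Or.inl iso
      · exact Or.inr (Or.inr ⟨hx, hy⟩)
  · push_neg at h2
    by_cases h1 : Nonempty G.edgeSet
    · obtain ⟨e0⟩ := h1
      exact Or.inl (single_edge_iso φ hG hH e0 fun e => h2 e e0)
    · exact Or.inl (no_edge_iso φ hG hH h1)
end

section
/- A graph G is the line graph of some graph if and only if the edge set of G can be partitioned into cliques such that every vertex of G lies in at most two of the cliques. -/
open SimpleGraph

section Aux

variable {V : Type}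

open Classical in
/-- Endpoint map: to each vertex `v` of `G` assign an edge (a `Sym2`) over the
vertex type `Set V ⊕ (V ⊕ V)`, whose endpoints are the cliques containing `v`,
padded with fresh vertices if `v` lies in fewer than two cliques. -/
noncomputable def krauszKf (C : Set (Set V)) (v : V) : Sym2 (Set V ⊕ (V ⊕ V)) :=
  if h1 : ∃ c, c ∈ C ∧ v ∈ c then
    if h2 : ∃ c', (c' ∈ C ∧ v ∈ c') ∧ c' ≠ h1.choose then
      s(Sum.inl h1.choose, Sum.inl h2.choose)
    else s(Sum.inl h1.choose, Sum.inr (Sum.inl v))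
  else s(Sum.inr (Sum.inl v), Sum.inr (Sum.inr v))

lemma krauszKf_mem {C : Set (Set V)} {v : V} {w : Set V ⊕ (V ⊕ V)}
    (hw : w ∈ krauszKf C v) :
    (∃ c, w = Sum.inl c ∧ c ∈ C ∧ v ∈ c) ∨ w = Sum.inr (Sum.inl v) ∨
      w = Sum.inr (Sum.inr v) := by
  unfold krauszKf at hw
  split_ifs at hw with h1 h2 <;> rw [Sym2.mem_iff] at hw
  · rcases hw with rfl | rfl
    · exact Or.inl ⟨_, rfl, h1.choose_spec⟩
    · exact Or.inl ⟨_, rfl, h2.choose_spec.1⟩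
  · rcases hw with rfl | rfl
    · exact Or.inl ⟨_, rfl, h1.choose_spec⟩
    · exact Or.inr (Or.inl rfl)
  · rcases hw with rfl | rfl
    · exact Or.inr (Or.inl rfl)
    · exact Or.inr (Or.inr rfl)

lemma krauszKf_inl_mem {C : Set (Set V)} {v : V}
    (hcard : {c | c ∈ C ∧ v ∈ c}.encard ≤ 2) {c : Set V}
    (hc : c ∈ C) (hv : v ∈ c) : Sum.inl c ∈ krauszKf C v := by
  unfold krauszKf
  split_ifs with h1 h2
  · rw [Sym2.mem_iff]
    by_contra hne
    push_neg at hne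
    obtain ⟨hne1, hne2⟩ := hne
    have hc1 : c ≠ h1.choose := fun h => hne1 (by rw [h])
    have hc2 : c ≠ h2.choose := fun h => hne2 (by rw [h])
    have hd : h2.choose ≠ h1.choose := h2.choose_spec.2
    have hsub : ({h1.choose, h2.choose, c} : Set (Set V)) ⊆ {c | c ∈ C ∧ v ∈ c} := by
      rintro x (rfl | rfl | rfl)
      · exact h1.choose_spec
      · exact h2.choose_spec.1
      · exact ⟨hc, hv⟩
    have h3 : ({h1.choose, h2.choose, c} : Set (Set V)).encard = 3 := by
      rw [Set.encard_insert_of_notMem (by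
        intro h
        rcases h with h | h
        · exact hd h.symm
        · exact hc1 h.symm), Set.encard_pair hc2.symm]
      rfl
    have := (Set.encard_mono hsub).trans hcard
    rw [h3] at this
    norm_num at this
  · push_neg at h2
    have := h2 c ⟨hc, hv⟩
    rw [Sym2.mem_iff]
    exact Or.inl (by rw [this])
  · exact absurd ⟨c, hc, hv⟩ h1

lemma krauszKf_inl_mem_rev {C : Set (Set V)} {v : V} {c : Set V}
    (h : Sum.inl c ∈ krauszKf C v) : c ∈ C ∧ v ∈ c := by
  rcases krauszKf_mem h with ⟨c', hc', h1, h2⟩ | h | h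
  · cases Sum.inl.inj hc'; exact ⟨h1, h2⟩
  · exact absurd h (by simp)
  · exact absurd h (by simp)

lemma krauszKf_not_isDiag (C : Set (Set V)) (v : V) : ¬ (krauszKf C v).IsDiag := by
  unfold krauszKf
  split_ifs with h1 h2 <;> rw [Sym2.mk_isDiag_iff]
  · intro h
    exact h2.choose_spec.2 (Sum.inl.inj h).symm
  · simp
  · simp

/-- A common member of `krauszKf C a` and `krauszKf C b` for `a ≠ b` must be a common
clique of `a` and `b`. -/
lemma krauszKf_common {C : Set (Set V)} {a b : V} (hab : a ≠ b)
    {w : Set V ⊕ (V ⊕ V)} (ha : w ∈ krauszKf C a) (hb : w ∈ krauszKf C b) :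
    ∃ c, w = Sum.inl c ∧ c ∈ C ∧ a ∈ c ∧ b ∈ c := by
  rcases krauszKf_mem ha with ⟨c, rfl, hcC, hac⟩ | rfl | rfl
  · exact ⟨c, rfl, hcC, hac, (krauszKf_inl_mem_rev hb).2⟩
  · rcases krauszKf_mem hb with ⟨c, hc, _⟩ | h | h
    · exact absurd hc (by simp)
    · exact absurd (by injection Sum.inr.inj h) hab
    · exact absurd (Sum.inr.inj h) (by simp)
  · rcases krauszKf_mem hb with ⟨c, hc, _⟩ | h | h
    · exact absurd hc (by simp)
    · exact absurd (Sum.inr.inj h) (by simp)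
    · exact absurd (by injection Sum.inr.inj h) hab

lemma krauszKf_inj {G : SimpleGraph V} {C : Set (Set V)}
    (hclique : ∀ c ∈ C, G.IsClique c)
    (hedge : ∀ a b : V, G.Adj a b → ∃! c, c ∈ C ∧ a ∈ c ∧ b ∈ c) :
    Function.Injective (krauszKf C) := by
  intro a b heq
  by_contra hab
  obtain ⟨⟨x, y⟩, hxy⟩ := Quot.exists_rep (krauszKf C a)
  have hxy' : krauszKf C a = s(x, y) := hxy.symm
  have hne : x ≠ y := by
    intro h
    exact krauszKf_not_isDiag C a (by rw [hxy', h]; exact Sym2.mk_isDiag_iff.2 rfl)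
  have hxa : x ∈ krauszKf C a := by rw [hxy']; exact Sym2.mem_mk_left _ _
  have hya : y ∈ krauszKf C a := by rw [hxy']; exact Sym2.mem_mk_right _ _
  have hxb : x ∈ krauszKf C b := heq ▸ hxa
  have hyb : y ∈ krauszKf C b := heq ▸ hya
  obtain ⟨c1, rfl, hc1C, hac1, hbc1⟩ := krauszKf_common hab hxa hxb
  obtain ⟨c2, rfl, hc2C, hac2, hbc2⟩ := krauszKf_common hab hya hyb
  have hcc : c1 ≠ c2 := fun h => hne (by rw [h])
  have hadj : G.Adj a b := hclique c1 hc1C hac1 hbc1 hab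
  exact hcc ((hedge a b hadj).unique ⟨hc1C, hac1, hbc1⟩ ⟨hc2C, hac2, hbc2⟩)

end Aux
open SimpleGraph

/-- G is a line graph of some simple graph. -/
def IsLineGraph {V : Type} (G : SimpleGraph V) : Prop :=
  ∃ (W : Type) (H : SimpleGraph W), Nonempty (G ≃g H.lineGraph)

/-- Krausz's theorem: G is a line graph iff its edges can be partitioned into
    cliques with every vertex in at most two cliques. -/
theorem krausz {V : Type} (G : SimpleGraph V) :
    IsLineGraph G ↔
      ∃ C : Set (Set V),
        (∀ c ∈ C, G.IsClique c) ∧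
        (∀ a b : V, G.Adj a b → ∃! c, c ∈ C ∧ a ∈ c ∧ b ∈ c) ∧
        (∀ v : V, {c | c ∈ C ∧ v ∈ c}.encard ≤ 2) := by
  constructor
  · rintro ⟨W, H, ⟨φ⟩⟩
    refine ⟨Set.range (fun w : W => {v : V | w ∈ (↑(φ v) : Sym2 W)}), ?_, ?_, ?_⟩
    · rintro c ⟨w, rfl⟩
      intro v hv v' hv' hne
      apply φ.map_adj_iff.mp
      rw [lineGraph_adj_iff_exists]
      exact ⟨fun h => hne (φ.toEquiv.injective h), w, hv, hv'⟩
    · intro a b hab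
      have hL := φ.map_adj_iff.mpr hab
      rw [lineGraph_adj_iff_exists] at hL
      obtain ⟨hne, w, hwa, hwb⟩ := hL
      refine ⟨{v | w ∈ (↑(φ v) : Sym2 W)}, ⟨⟨w, rfl⟩, hwa, hwb⟩, ?_⟩
      rintro c ⟨⟨w', rfl⟩, ha', hb'⟩
      have hww : w' = w := by
        by_contra h
        have h1 : (↑(φ a) : Sym2 W) = s(w', w) := (Sym2.mem_and_mem_iff h).1 ⟨ha', hwa⟩
        have h2 : (↑(φ b) : Sym2 W) = s(w', w) := (Sym2.mem_and_mem_iff h).1 ⟨hb', hwb⟩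
        exact hne (Subtype.ext (h1.trans h2.symm))
      rw [hww]
    · intro v
      have hsub : {c | c ∈ Set.range (fun w : W => {v : V | w ∈ (↑(φ v) : Sym2 W)}) ∧ v ∈ c}
          ⊆ (fun w : W => {v : V | w ∈ (↑(φ v) : Sym2 W)}) '' {w | w ∈ (↑(φ v) : Sym2 W)} := by
        rintro c ⟨⟨w, rfl⟩, hv⟩
        exact ⟨w, hv, rfl⟩
      have h2 : {w : W | w ∈ (↑(φ v) : Sym2 W)}.encard ≤ 2 := by
        induction (↑(φ v) : Sym2 W) using Sym2.ind with
        | _ x y =>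
          have : {w : W | w ∈ s(x, y)} = insert x {y} := by
            ext w; simp [Sym2.mem_iff]
          rw [this]
          refine (Set.encard_insert_le _ _).trans ?_
          rw [Set.encard_singleton]
          decide
      exact (Set.encard_mono hsub).trans ((Set.encard_image_le _ _).trans h2)
  · rintro ⟨C, hclique, hedge, hcard⟩
    classical
    have hinj := krauszKf_inj (G := G) hclique hedge
    set H : SimpleGraph (Set V ⊕ (V ⊕ V)) :=
      SimpleGraph.fromEdgeSet (Set.range (krauszKf C)) with hH
    have hES : H.edgeSet = Set.range (krauszKf C) := by
      rw [hH, SimpleGraph.edgeSet_fromEdgeSet]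
      ext e
      constructor
      · exact fun h => h.1
      · rintro ⟨v, rfl⟩
        exact ⟨⟨v, rfl⟩, krauszKf_not_isDiag C v⟩
    have hmem : ∀ v : V, krauszKf C v ∈ H.edgeSet := by
      intro v; rw [hES]; exact Set.mem_range_self v
    have hbij : Function.Bijective (fun v : V => (⟨krauszKf C v, hmem v⟩ : H.edgeSet)) := by
      constructor
      · intro a b h
        exact hinj (Subtype.ext_iff.1 h)
      · rintro ⟨e, he⟩
        rw [hES] at he
        obtain ⟨v, rfl⟩ := he
        exact ⟨v, rfl⟩
    refine ⟨_, H, ⟨⟨Equiv.ofBijective _ hbij, ?_⟩⟩⟩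
    intro a b
    rw [lineGraph_adj_iff_exists]
    constructor
    · rintro ⟨hne, w, hwa, hwb⟩
      have hab : a ≠ b := fun h => hne (by rw [h])
      obtain ⟨c, rfl, hcC, hac, hbc⟩ := krauszKf_common hab hwa hwb
      exact hclique c hcC hac hbc hab
    · intro hadj
      obtain ⟨c, ⟨hcC, hac, hbc⟩, -⟩ := hedge a b hadj
      refine ⟨fun h => hadj.ne (hinj (Subtype.ext_iff.1 h)), Sum.inl c,
        krauszKf_inl_mem (hcard a) hcC hac, krauszKf_inl_mem (hcard b) hcC hbc⟩
end

section
/- A graph G is a line graph of some graph if and only if G contains no induced K_{1,3}, and whenever two odd triangles of G share a common edge, the subgraph induced by their four vertices is K_4. -/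
open scoped Classical

open SimpleGraph

/-- a, b, c form a triangle of G. -/
def IsTri {V : Type} (G : SimpleGraph V) (a b c : V) : Prop :=
  G.Adj a b ∧ G.Adj a c ∧ G.Adj b c

/-- An odd triangle: some vertex of G is adjacent to an odd number of its vertices. -/
noncomputable def OddTri {V : Type} (G : SimpleGraph V) (a b c : V) : Prop :=
  IsTri G a b c ∧ ∃ v : V,
    Odd ((if G.Adj v a then 1 else 0) + (if G.Adj v b then 1 else 0)
      + (if G.Adj v c then 1 else 0) : ℕ)

namespace VRW

variable {V : Type} {G : SimpleGraph V}

lemma isTri_perm {a b c : V} (h : IsTri G a b c) :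
    IsTri G b a c ∧ IsTri G a c b := by
  obtain ⟨h1, h2, h3⟩ := h
  exact ⟨⟨h1.symm, h3, h2⟩, ⟨h2, h1, h3.symm⟩⟩

lemma oddTri_perm1 {a b c : V} (h : OddTri G a b c) : OddTri G b a c := by
  obtain ⟨ht, v, hv⟩ := h
  obtain ⟨k, hk⟩ := hv
  exact ⟨(isTri_perm ht).1, v, k, by omega⟩

lemma oddTri_perm2 {a b c : V} (h : OddTri G a b c) : OddTri G a c b := by
  obtain ⟨ht, v, hv⟩ := h
  obtain ⟨k, hk⟩ := hv
  exact ⟨(isTri_perm ht).2, v, k, by omega⟩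

/-- all-three witness -/
lemma oddTri_of_three {a b c v : V} (ht : IsTri G a b c)
    (h1 : G.Adj v a) (h2 : G.Adj v b) (h3 : G.Adj v c) : OddTri G a b c :=
  ⟨ht, v, by simp [h1, h2, h3]; decide⟩

/-- exactly-one witness -/
lemma oddTri_of_one {a b c v : V} (ht : IsTri G a b c)
    (h1 : G.Adj v a) (h2 : ¬G.Adj v b) (h3 : ¬G.Adj v c) : OddTri G a b c :=
  ⟨ht, v, by simp [h1, h2, h3]⟩

/-- from non-oddness, the adjacency count of every vertex is even; convenient form. -/
lemma even_of_not_oddTri {a b c : V} (ht : IsTri G a b c) (h : ¬OddTri G a b c) (v : V) :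
    (G.Adj v a ∧ G.Adj v b ∧ ¬G.Adj v c) ∨ (G.Adj v a ∧ ¬G.Adj v b ∧ G.Adj v c) ∨
    (¬G.Adj v a ∧ G.Adj v b ∧ G.Adj v c) ∨ (¬G.Adj v a ∧ ¬G.Adj v b ∧ ¬G.Adj v c) := by
  by_contra hcon
  push_neg at hcon
  apply h
  refine ⟨ht, v, ?_⟩
  by_cases h1 : G.Adj v a <;> by_cases h2 : G.Adj v b <;> by_cases h3 : G.Adj v c <;>
    simp [h1, h2, h3] at hcon ⊢ <;> first | decide | tauto



variable {W : Type} {H : SimpleGraph W}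

lemma lg_adj_iff (e : G ≃g H.lineGraph) {a b : V} :
    G.Adj a b ↔ (a ≠ b ∧ ∃ x, x ∈ (↑(e a) : Sym2 W) ∧ x ∈ (↑(e b) : Sym2 W)) := by
  rw [← e.map_rel_iff, lineGraph_adj_iff_exists]
  constructor
  · rintro ⟨h1, h2⟩
    exact ⟨fun h => h1 (by rw [h]), h2⟩
  · rintro ⟨h1, h2⟩
    exact ⟨fun h => h1 (e.injective (Subtype.ext (by exact_mod_cast congrArg Subtype.val h))), h2⟩

/-- an odd triangle in a line graph has a common vertex (is a star) -/
lemma star_of_oddTri (e : G ≃g H.lineGraph) {a b c : V} (h : OddTri G a b c) :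
    ∃ x : W, x ∈ (↑(e a) : Sym2 W) ∧ x ∈ (↑(e b) : Sym2 W) ∧ x ∈ (↑(e c) : Sym2 W) := by
  obtain ⟨⟨hab, hac, hbc⟩, v, hv⟩ := h
  obtain ⟨-, p, hp1, hp2⟩ := (lg_adj_iff e).1 hab
  obtain ⟨-, q, hq1, hq2⟩ := (lg_adj_iff e).1 hac
  obtain ⟨-, r, hr1, hr2⟩ := (lg_adj_iff e).1 hbc
  by_cases hpq : p = q
  · exact ⟨p, hp1, hp2, hpq ▸ hq2⟩
  by_cases hpr : p = r
  · exact ⟨p, hp1, hp2, hpr ▸ hr2⟩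
  by_cases hqr : q = r
  · exact ⟨q, hq1, hqr ▸ hr1, hq2⟩
  exfalso
  have hEa : (↑(e a) : Sym2 W) = s(p, q) := (Sym2.mem_and_mem_iff hpq).1 ⟨hp1, hq1⟩
  have hEb : (↑(e b) : Sym2 W) = s(p, r) := (Sym2.mem_and_mem_iff hpr).1 ⟨hp2, hr1⟩
  have hEc : (↑(e c) : Sym2 W) = s(q, r) := (Sym2.mem_and_mem_iff hqr).1 ⟨hq2, hr2⟩
  set D : Sym2 W := (↑(e v) : Sym2 W) with hD
  have adja : G.Adj v a ↔ (v ≠ a ∧ ∃ x, x ∈ D ∧ x ∈ s(p,q)) := by rw [lg_adj_iff e, hEa]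
  have adjb : G.Adj v b ↔ (v ≠ b ∧ ∃ x, x ∈ D ∧ x ∈ s(p,r)) := by rw [lg_adj_iff e, hEb]
  have adjc : G.Adj v c ↔ (v ≠ c ∧ ∃ x, x ∈ D ∧ x ∈ s(q,r)) := by rw [lg_adj_iff e, hEc]
  have hDne : ∀ z : V, v ≠ z → D ≠ (↑(e z) : Sym2 W) := by
    intro z hz hDz
    exact hz (e.injective (Subtype.ext hDz))
  by_cases hva : G.Adj v a <;> by_cases hvb : G.Adj v b <;> by_cases hvc : G.Adj v c <;>
    simp only [hva, hvb, hvc, if_true, if_false] at hv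
  -- case T T T
  · have hPQ : ¬(p ∈ D ∧ q ∈ D) := fun ⟨h1, h2⟩ =>
      hDne a hva.ne (((Sym2.mem_and_mem_iff hpq).1 ⟨h1, h2⟩).trans hEa.symm)
    have hPR : ¬(p ∈ D ∧ r ∈ D) := fun ⟨h1, h2⟩ =>
      hDne b hvb.ne (((Sym2.mem_and_mem_iff hpr).1 ⟨h1, h2⟩).trans hEb.symm)
    have hQR : ¬(q ∈ D ∧ r ∈ D) := fun ⟨h1, h2⟩ =>
      hDne c hvc.ne (((Sym2.mem_and_mem_iff hqr).1 ⟨h1, h2⟩).trans hEc.symm)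
    obtain ⟨-, x1, hx1D, hx1⟩ := adja.1 hva
    obtain ⟨-, x2, hx2D, hx2⟩ := adjb.1 hvb
    obtain ⟨-, x3, hx3D, hx3⟩ := adjc.1 hvc
    have m1 : p ∈ D ∨ q ∈ D := by
      rcases Sym2.mem_iff.1 hx1 with h | h
      · exact Or.inl (h ▸ hx1D)
      · exact Or.inr (h ▸ hx1D)
    have m2 : p ∈ D ∨ r ∈ D := by
      rcases Sym2.mem_iff.1 hx2 with h | h
      · exact Or.inl (h ▸ hx2D)
      · exact Or.inr (h ▸ hx2D)
    have m3 : q ∈ D ∨ r ∈ D := by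
      rcases Sym2.mem_iff.1 hx3 with h | h
      · exact Or.inl (h ▸ hx3D)
      · exact Or.inr (h ▸ hx3D)
    rcases m1 with h1 | h1
    · rcases m3 with h3 | h3
      · exact hPQ ⟨h1, h3⟩
      · exact hPR ⟨h1, h3⟩
    · rcases m2 with h2 | h2
      · exact hPQ ⟨h2, h1⟩
      · exact hQR ⟨h1, h2⟩
  · simp [Nat.odd_iff] at hv
  · simp [Nat.odd_iff] at hv
  -- case T F F
  · obtain ⟨-, x1, hx1D, hx1⟩ := adja.1 hva
    rcases not_and_or.1 ((adjb).not.1 hvb) with hvb' | hnb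
    · push_neg at hvb'
      subst hvb'
      exact hvc hbc
    rcases not_and_or.1 ((adjc).not.1 hvc) with hvc' | hnc
    · push_neg at hvc'
      subst hvc'
      exact hvb hbc.symm
    push_neg at hnb hnc
    rcases Sym2.mem_iff.1 hx1 with h | h
    · exact hnb x1 hx1D (by rw [h]; exact Sym2.mem_mk_left p r)
    · exact hnc x1 hx1D (by rw [h]; exact Sym2.mem_mk_left q r)
  · simp [Nat.odd_iff] at hv
  -- case F T F
  · obtain ⟨-, x2, hx2D, hx2⟩ := adjb.1 hvb
    rcases not_and_or.1 ((adja).not.1 hva) with hva' | hna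
    · push_neg at hva'
      subst hva'
      exact hvc hac
    rcases not_and_or.1 ((adjc).not.1 hvc) with hvc' | hnc
    · push_neg at hvc'
      subst hvc'
      exact hva hac.symm
    push_neg at hna hnc
    rcases Sym2.mem_iff.1 hx2 with h | h
    · exact hna x2 hx2D (by rw [h]; exact Sym2.mem_mk_left p q)
    · exact hnc x2 hx2D (by rw [h]; exact Sym2.mem_mk_right q r)
  -- case F F T
  · obtain ⟨-, x3, hx3D, hx3⟩ := adjc.1 hvc
    rcases not_and_or.1 ((adja).not.1 hva) with hva' | hna
    · push_neg at hva'
      subst hva'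
      exact hvb hab
    rcases not_and_or.1 ((adjb).not.1 hvb) with hvb' | hnb
    · push_neg at hvb'
      subst hvb'
      exact hva hab.symm
    push_neg at hna hnb
    rcases Sym2.mem_iff.1 hx3 with h | h
    · exact hna x3 hx3D (by rw [h]; exact Sym2.mem_mk_right p q)
    · exact hnb x3 hx3D (by rw [h]; exact Sym2.mem_mk_right p r)
  · simp [Nat.odd_iff] at hv

/-- no induced claw in a line graph -/
lemma forward_claw (e : G ≃g H.lineGraph) (s : Set V) :
    ¬ Nonempty (G.induce s ≃g completeBipartiteGraph (Fin 1) (Fin 3)) := by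
  rintro ⟨ψ⟩
  set c : ↥s := ψ.symm (Sum.inl 0) with hc
  set l : Fin 3 → ↥s := fun i => ψ.symm (Sum.inr i) with hl
  have hadj : ∀ i : Fin 3, G.Adj ↑c ↑(l i) := by
    intro i
    have : (G.induce s).Adj (ψ.symm (Sum.inl 0)) (ψ.symm (Sum.inr i)) := by
      rw [ψ.symm.map_rel_iff]
      simp
    exact this
  have hnadj : ∀ i j : Fin 3, ¬ G.Adj ↑(l i) ↑(l j) := by
    intro i j hadj'
    have : (G.induce s).Adj (ψ.symm (Sum.inr i)) (ψ.symm (Sum.inr j)) := hadj'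
    rw [ψ.symm.map_rel_iff] at this
    simp at this
  obtain ⟨x0, y0, hE0⟩ : ∃ x y, (↑(e ↑c) : Sym2 W) = s(x, y) :=
    Sym2.inductionOn (↑(e ↑c) : Sym2 W) (fun x y => ⟨x, y, rfl⟩)
  have key : ∀ i : Fin 3, x0 ∈ (↑(e ↑(l i)) : Sym2 W) ∨ y0 ∈ (↑(e ↑(l i)) : Sym2 W) := by
    intro i
    obtain ⟨-, x, hx1, hx2⟩ := (lg_adj_iff e).1 (hadj i)
    rw [hE0] at hx1
    rcases Sym2.mem_iff.1 hx1 with h | h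
    · exact Or.inl (h ▸ hx2)
    · exact Or.inr (h ▸ hx2)
  -- pigeonhole: among 3 indices two share x0 or y0
  have : ∀ i j : Fin 3, i ≠ j →
      ¬ ((x0 ∈ (↑(e ↑(l i)) : Sym2 W) ∧ x0 ∈ (↑(e ↑(l j)) : Sym2 W)) ∨
         (y0 ∈ (↑(e ↑(l i)) : Sym2 W) ∧ y0 ∈ (↑(e ↑(l j)) : Sym2 W))) := by
    intro i j hij hcom
    apply hnadj i j
    rw [lg_adj_iff e]
    have hne : (↑(l i) : V) ≠ ↑(l j) := by
      intro hval
      exact hij (by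
        have : l i = l j := Subtype.ext hval
        have := ψ.symm.injective (hl ▸ this)
        simpa using this)
    rcases hcom with ⟨h1, h2⟩ | ⟨h1, h2⟩
    · exact ⟨hne, x0, h1, h2⟩
    · exact ⟨hne, y0, h1, h2⟩
  rcases key 0 with h0 | h0 <;> rcases key 1 with h1 | h1 <;> rcases key 2 with h2 | h2
  · exact this 0 1 (by decide) (Or.inl ⟨h0, h1⟩)
  · exact this 0 1 (by decide) (Or.inl ⟨h0, h1⟩)
  · exact this 0 2 (by decide) (Or.inl ⟨h0, h2⟩)
  · exact this 1 2 (by decide) (Or.inr ⟨h1, h2⟩)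
  · exact this 1 2 (by decide) (Or.inl ⟨h1, h2⟩)
  · exact this 0 2 (by decide) (Or.inr ⟨h0, h2⟩)
  · exact this 0 1 (by decide) (Or.inr ⟨h0, h1⟩)
  · exact this 0 1 (by decide) (Or.inr ⟨h0, h1⟩)

lemma forward_odd (e : G ≃g H.lineGraph) {a b c d : V}
    (h1 : OddTri G a b c) (h2 : OddTri G a b d) (hcd : c ≠ d) :
    ∀ x ∈ ({a, b, c, d} : Set V), ∀ y ∈ ({a, b, c, d} : Set V), x ≠ y → G.Adj x y := by
  obtain ⟨α, ha1, hb1, hc1⟩ := star_of_oddTri e h1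
  obtain ⟨β, ha2, hb2, hd2⟩ := star_of_oddTri e h2
  have hab : a ≠ b := h1.1.1.ne
  have hEab : (↑(e a) : Sym2 W) ≠ (↑(e b) : Sym2 W) := by
    intro hE
    exact hab (e.injective (Subtype.ext hE))
  have hαβ : α = β := by
    by_contra hne
    exact hEab (((Sym2.mem_and_mem_iff hne).1 ⟨ha1, ha2⟩).trans
      ((Sym2.mem_and_mem_iff hne).1 ⟨hb1, hb2⟩).symm)
  subst hαβ
  have hmem : ∀ t ∈ ({a, b, c, d} : Set V), α ∈ (↑(e t) : Sym2 W) := by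
    intro t ht
    rcases ht with h | h | h | h <;> subst h
    · exact ha1
    · exact hb1
    · exact hc1
    · exact hd2
  intro x hx y hy hxy
  exact (lg_adj_iff e).2 ⟨hxy, α, hmem x hx, hmem y hy⟩


lemma forward (h : IsLineGraph G) :
    (∀ s : Set V, ¬ Nonempty (G.induce s ≃g completeBipartiteGraph (Fin 1) (Fin 3))) ∧
      (∀ a b c d : V, OddTri G a b c → OddTri G a b d → c ≠ d →
        ∀ x ∈ ({a, b, c, d} : Set V), ∀ y ∈ ({a, b, c, d} : Set V),
          x ≠ y → G.Adj x y) := by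
  obtain ⟨W, H, ⟨e⟩⟩ := h
  exact ⟨forward_claw e, fun a b c d h1 h2 hcd => forward_odd e h1 h2 hcd⟩


variable {V : Type} {G : SimpleGraph V}

/-- build an induced claw from a combinatorial claw -/
lemma claw_iso {u v1 v2 v3 : V}
    (h1 : G.Adj u v1) (h2 : G.Adj u v2) (h3 : G.Adj u v3)
    (n12 : ¬G.Adj v1 v2) (n13 : ¬G.Adj v1 v3) (n23 : ¬G.Adj v2 v3)
    (d12 : v1 ≠ v2) (d13 : v1 ≠ v3) (d23 : v2 ≠ v3) :
    Nonempty (G.induce {u, v1, v2, v3} ≃g completeBipartiteGraph (Fin 1) (Fin 3)) := by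
  have du1 : u ≠ v1 := h1.ne
  have du2 : u ≠ v2 := h2.ne
  have du3 : u ≠ v3 := h3.ne
  set s : Set V := {u, v1, v2, v3} with hs
  have hu : u ∈ s := by simp [hs]
  have hv1 : v1 ∈ s := by simp [hs]
  have hv2 : v2 ∈ s := by simp [hs]
  have hv3 : v3 ∈ s := by simp [hs]
  let f : ↥s → (Fin 1 ⊕ Fin 3) := fun x =>
    if x = (⟨u, hu⟩ : ↥s) then Sum.inl 0
    else if x = (⟨v1, hv1⟩ : ↥s) then Sum.inr 0
    else if x = (⟨v2, hv2⟩ : ↥s) then Sum.inr 1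
    else Sum.inr 2
  let g : (Fin 1 ⊕ Fin 3) → ↥s := fun x =>
    match x with
    | Sum.inl _ => ⟨u, hu⟩
    | Sum.inr 0 => ⟨v1, hv1⟩
    | Sum.inr 1 => ⟨v2, hv2⟩
    | Sum.inr 2 => ⟨v3, hv3⟩
  have hcases : ∀ x : ↥s, x = ⟨u, hu⟩ ∨ x = ⟨v1, hv1⟩ ∨ x = ⟨v2, hv2⟩ ∨ x = ⟨v3, hv3⟩ := by
    rintro ⟨x, hx⟩
    rcases hx with h | h | h | h <;> subst h <;> simp
  have hgf : ∀ x, g (f x) = x := by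
    intro x
    rcases hcases x with h | h | h | h <;> subst h <;>
      simp [f, g, Subtype.ext_iff, du1, du2, du3, d12, d13, d23, du1.symm, du2.symm, du3.symm,
        d12.symm, d13.symm, d23.symm]
  have hfg : ∀ x, f (g x) = x := by
    rintro (⟨i⟩ | x)
    · simp [f, g]
      omega
    · fin_cases x <;>
        simp [f, g, Subtype.ext_iff, du1, du2, du3, d12, d13, d23, du1.symm, du2.symm, du3.symm,
          d12.symm, d13.symm, d23.symm]
  have n21 : ¬G.Adj v2 v1 := fun h => n12 h.symm
  have n31 : ¬G.Adj v3 v1 := fun h => n13 h.symm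
  have n32 : ¬G.Adj v3 v2 := fun h => n23 h.symm
  refine ⟨⟨⟨f, g, hgf, hfg⟩, ?_⟩⟩
  intro x y
  rcases hcases x with h | h | h | h <;> rcases hcases y with h' | h' | h' | h' <;>
    subst h <;> subst h' <;>
    simp [f, Subtype.ext_iff, du1, du2, du3, d12, d13, d23, du1.symm, du2.symm, du3.symm,
      d12.symm, d13.symm, d23.symm, h1, h2, h3, n12, n13, n23, n21, n31, n32, h1.symm, h2.symm, h3.symm,
      fun h => n12 (G.adj_symm h), fun h => n13 (G.adj_symm h), fun h => n23 (G.adj_symm h),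
      G.irrefl]

/-! ### components, labelings -/

def Comp (G : SimpleGraph V) (u : V) : Set V := {x | G.Reachable u x}

lemma mem_comp_self (G : SimpleGraph V) (u : V) : u ∈ Comp G u := by
  exact Reachable.refl u

lemma mem_comp_of_adj {G : SimpleGraph V} {u v : V} (h : G.Adj u v) : v ∈ Comp G u :=
  h.reachable

lemma comp_eq_of_adj {G : SimpleGraph V} {u v : V} (h : G.Adj u v) : Comp G u = Comp G v := by
  ext t
  exact ⟨fun ht => (h.symm.reachable).trans ht, fun ht => (h.reachable).trans ht⟩

lemma adj_mem_comp {G : SimpleGraph V} {u a b : V} (ha : a ∈ Comp G u) (h : G.Adj a b) :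
    b ∈ Comp G u := ha.trans h.reachable

def GoodLabel (G : SimpleGraph V) (C : Set V) (f : V → Sym2 (Fin 4)) : Prop :=
  (∀ a ∈ C, ∀ b ∈ C, G.Adj a b ↔ (f a ≠ f b ∧ ∃ i, i ∈ f a ∧ i ∈ f b)) ∧
  (∀ a ∈ C, ∀ b ∈ C, f a = f b → a = b) ∧
  (∀ a ∈ C, ¬ (f a).IsDiag)

def HasLabel (G : SimpleGraph V) (C : Set V) : Prop := ∃ f, GoodLabel G C f

noncomputable def lab (G : SimpleGraph V) (C : Set V) : V → Sym2 (Fin 4) :=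
  if h : HasLabel G C then h.choose else fun _ => s((0 : Fin 4), (0 : Fin 4))

lemma lab_good {G : SimpleGraph V} {C : Set V} (h : HasLabel G C) : GoodLabel G C (lab G C) := by
  rw [lab, dif_pos h]
  exact h.choose_spec

def LS (G : SimpleGraph V) (u v w : V) : Prop :=
  G.Adj u v ∧ G.Adj u w ∧ G.Adj v w ∧ HasLabel G (Comp G u) ∧
    ∃ i, i ∈ lab G (Comp G u) u ∧ i ∈ lab G (Comp G u) v ∧ i ∈ lab G (Comp G u) w

def P (G : SimpleGraph V) (u v w : V) : Prop := OddTri G u v w ∨ LS G u v w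

lemma LS_swap {G : SimpleGraph V} {u v w : V} (h : LS G u v w) : LS G u w v := by
  obtain ⟨h1, h2, h3, h4, i, hi1, hi2, hi3⟩ := h
  exact ⟨h2, h1, h3.symm, h4, i, hi1, hi3, hi2⟩

lemma LS_rot {G : SimpleGraph V} {u v w : V} (h : LS G u v w) : LS G v u w := by
  obtain ⟨h1, h2, h3, h4, i, hi1, hi2, hi3⟩ := h
  have hc : Comp G u = Comp G v := comp_eq_of_adj h1
  rw [hc] at h4 hi1 hi2 hi3
  exact ⟨h1.symm, h3, h2, h4, i, hi2, hi1, hi3⟩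

lemma P_swap {G : SimpleGraph V} {u v w : V} (h : P G u v w) : P G u w v := by
  rcases h with h | h
  · exact Or.inl (oddTri_perm2 h)
  · exact Or.inr (LS_swap h)

lemma P_rot {G : SimpleGraph V} {u v w : V} (h : P G u v w) : P G v u w := by
  rcases h with h | h
  · exact Or.inl (oddTri_perm1 h)
  · exact Or.inr (LS_rot h)

lemma P_isTri {G : SimpleGraph V} {u v w : V} (h : P G u v w) : IsTri G u v w := by
  rcases h with h | h
  · exact h.1
  · exact ⟨h.1, h.2.1, h.2.2.1⟩

set_option synthInstance.maxSize 2048 in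
set_option synthInstance.maxHeartbeats 400000 in
set_option maxHeartbeats 1000000 in
lemma K4even : ∀ e f g h : Sym2 (Fin 4), ¬e.IsDiag → ¬f.IsDiag → ¬g.IsDiag → ¬h.IsDiag →
    (e ≠ f ∧ ∃ i, i ∈ e ∧ i ∈ f) → (e ≠ g ∧ ∃ i, i ∈ e ∧ i ∈ g) →
    (f ≠ g ∧ ∃ i, i ∈ f ∧ i ∈ g) →
    ¬ Odd ((if (h ≠ e ∧ ∃ i, i ∈ h ∧ i ∈ e) then 1 else 0) +
           (if (h ≠ f ∧ ∃ i, i ∈ h ∧ i ∈ f) then 1 else 0) +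
           (if (h ≠ g ∧ ∃ i, i ∈ h ∧ i ∈ g) then 1 else 0) : ℕ) := by decide

/-- in a labeled (sporadic) component there is no odd triangle based at `u` -/
lemma no_odd_of_hasLabel {G : SimpleGraph V} {u v w : V} (hlab : HasLabel G (Comp G u))
    (huv : G.Adj u v) (huw : G.Adj u w) (hvw : G.Adj v w) : ¬ OddTri G u v w := by
  rintro ⟨-, y, hy⟩
  obtain ⟨hadj, hinj, hdiag⟩ := lab_good hlab
  set f := lab G (Comp G u) with hf
  have hu : u ∈ Comp G u := mem_comp_self G u
  have hv : v ∈ Comp G u := mem_comp_of_adj huv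
  have hw : w ∈ Comp G u := mem_comp_of_adj huw
  by_cases hyC : y ∈ Comp G u
  · have e1 : G.Adj y u ↔ (f y ≠ f u ∧ ∃ i, i ∈ f y ∧ i ∈ f u) := hadj y hyC u hu
    have e2 : G.Adj y v ↔ (f y ≠ f v ∧ ∃ i, i ∈ f y ∧ i ∈ f v) := hadj y hyC v hv
    have e3 : G.Adj y w ↔ (f y ≠ f w ∧ ∃ i, i ∈ f y ∧ i ∈ f w) := hadj y hyC w hw
    have hO := K4even (f u) (f v) (f w) (f y) (hdiag u hu) (hdiag v hv) (hdiag w hw)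
      (hdiag y hyC) ((hadj u hu v hv).1 huv) ((hadj u hu w hw).1 huw) ((hadj v hv w hw).1 hvw)
    apply hO
    rw [← if_congr e1 rfl rfl, ← if_congr e2 rfl rfl, ← if_congr e3 rfl rfl]
    exact hy
  · have nyu : ¬ G.Adj y u := fun h => hyC (mem_comp_of_adj h.symm)
    have nyv : ¬ G.Adj y v := fun h => hyC (adj_mem_comp hv h.symm)
    have nyw : ¬ G.Adj y w := fun h => hyC (adj_mem_comp hw h.symm)
    simp [nyu, nyv, nyw, Nat.odd_iff] at hy

lemma pigeon {u v w x : V} (hlab : HasLabel G (Comp G u))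
    (huv : G.Adj u v) (huw : G.Adj u w) (hux : G.Adj u x)
    (dvw : v ≠ w) (dvx : v ≠ x) (dwx : w ≠ x) :
    P G u v w ∨ P G u w x ∨ P G u v x := by
  obtain ⟨hadj, hinj, hdiag⟩ := lab_good hlab
  set f := lab G (Comp G u) with hf
  have hu : u ∈ Comp G u := mem_comp_self G u
  have hv : v ∈ Comp G u := mem_comp_of_adj huv
  have hw : w ∈ Comp G u := mem_comp_of_adj huw
  have hx : x ∈ Comp G u := mem_comp_of_adj hux
  obtain ⟨p, q, hpq⟩ : ∃ p q, f u = s(p, q) :=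
    Sym2.inductionOn (f u) fun p q => ⟨p, q, rfl⟩
  have mkP : ∀ s t : V, G.Adj u s → G.Adj u t → s ≠ t → s ∈ Comp G u → t ∈ Comp G u →
      ∀ i : Fin 4, i ∈ f u → i ∈ f s → i ∈ f t → P G u s t := by
    intro s t hus hut hst hsC htC i hiu his hit
    have hadjst : G.Adj s t := (hadj s hsC t htC).2
      ⟨fun heq => hst (hinj s hsC t htC heq), ⟨i, his, hit⟩⟩
    exact Or.inr ⟨hus, hut, hadjst, hlab, i, hiu, his, hit⟩
  have key : ∀ t : V, t ∈ Comp G u → G.Adj u t → (p ∈ f t ∨ q ∈ f t) := by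
    intro t htC hut
    obtain ⟨-, i, hiu, hit⟩ := (hadj u hu t htC).1 hut
    rw [hpq] at hiu
    rcases Sym2.mem_iff.1 hiu with h | h
    · exact Or.inl (h ▸ hit)
    · exact Or.inr (h ▸ hit)
  have hpu : p ∈ f u := by rw [hpq]; exact Sym2.mem_mk_left p q
  have hqu : q ∈ f u := by rw [hpq]; exact Sym2.mem_mk_right p q
  rcases key v hv huv with h1 | h1 <;> rcases key w hw huw with h2 | h2 <;>
    rcases key x hx hux with h3 | h3
  · exact Or.inl (mkP v w huv huw dvw hv hw p hpu h1 h2)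
  · exact Or.inl (mkP v w huv huw dvw hv hw p hpu h1 h2)
  · exact Or.inr (Or.inr (mkP v x huv hux dvx hv hx p hpu h1 h3))
  · exact Or.inr (Or.inl (mkP w x huw hux dwx hw hx q hqu h2 h3))
  · exact Or.inr (Or.inl (mkP w x huw hux dwx hw hx p hpu h2 h3))
  · exact Or.inr (Or.inr (mkP v x huv hux dvx hv hx q hqu h1 h3))
  · exact Or.inl (mkP v w huv huw dvw hv hw q hqu h1 h2)
  · exact Or.inl (mkP v w huv huw dvw hv hw q hqu h1 h2)

lemma P_trans (hK : ∀ a b c d : V, OddTri G a b c → OddTri G a b d → c ≠ d →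
      ∀ x ∈ ({a, b, c, d} : Set V), ∀ y ∈ ({a, b, c, d} : Set V), x ≠ y → G.Adj x y)
    {u v w x : V} (h1 : P G u v w) (h2 : P G u w x) (hvx : v ≠ x) : P G u v x := by
  have t1 := P_isTri h1
  have t2 := P_isTri h2
  rcases h1 with o1 | l1
  · rcases h2 with o2 | l2
    · have hadjvx : G.Adj v x := by
        refine hK u w v x (oddTri_perm2 o1) o2 hvx v ?_ x ?_ hvx <;> simp
      refine Or.inl (oddTri_of_three ⟨t1.1, t2.2.1, hadjvx⟩ t1.2.1.symm t1.2.2.symm t2.2.2)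
    · exact absurd o1 (no_odd_of_hasLabel l2.2.2.2.1 t1.1 t1.2.1 t1.2.2)
  · rcases h2 with o2 | l2
    · exact absurd o2 (no_odd_of_hasLabel l1.2.2.2.1 t2.1 t2.2.1 t2.2.2)
    · obtain ⟨huv, huw, hvw, hlab, i, hiu, hiv, hiw⟩ := l1
      obtain ⟨-, hux, hwx, -, j, hju, hjw, hjx⟩ := l2
      obtain ⟨hadj, hinj, hdiag⟩ := lab_good hlab
      by_cases hij : i = j
      · subst hij
        have hvC := mem_comp_of_adj huv
        have hxC := mem_comp_of_adj hux
        have hadjvx : G.Adj v x := (hadj v hvC x hxC).2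
          ⟨fun heq => hvx (hinj v hvC x hxC heq), ⟨i, hiv, hjx⟩⟩
        exact Or.inr ⟨huv, hux, hadjvx, hlab, i, hiu, hiv, hjx⟩
      · exfalso
        have hC : lab G (Comp G u) u = lab G (Comp G u) w :=
          ((Sym2.mem_and_mem_iff hij).1 ⟨hiu, hju⟩).trans
            ((Sym2.mem_and_mem_iff hij).1 ⟨hiw, hjw⟩).symm
        exact huw.ne (hinj u (mem_comp_self G u) w (mem_comp_of_adj huw) hC)

/-! ## case B -/

lemma caseB
    (hclaw : ∀ u v1 v2 v3 : V, G.Adj u v1 → G.Adj u v2 → G.Adj u v3 →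
      ¬G.Adj v1 v2 → ¬G.Adj v1 v3 → ¬G.Adj v2 v3 → v1 ≠ v2 → v1 ≠ v3 → v2 ≠ v3 → False)
    (hK : ∀ a b c d : V, OddTri G a b c → OddTri G a b d → c ≠ d →
      ∀ x ∈ ({a, b, c, d} : Set V), ∀ y ∈ ({a, b, c, d} : Set V), x ≠ y → G.Adj x y)
    {u v w x : V}
    (huv : G.Adj u v) (huw : G.Adj u w) (hux : G.Adj u x)
    (havw : G.Adj v w) (hawx : G.Adj w x) (hnvx : ¬G.Adj v x) (dvx : v ≠ x)
    (hno1 : ¬OddTri G u v w) (hno2 : ¬OddTri G u w x) :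
    HasLabel G (Comp G u) := by
  have tri1 : IsTri G u v w := ⟨huv, huw, havw⟩
  have tri2 : IsTri G u w x := ⟨huw, hux, hawx⟩
  set Yt : V → Prop := fun t => G.Adj u t ∧ ¬G.Adj t w ∧ t ≠ w with hYt
  set Zt : V → Prop := fun t => G.Adj w t ∧ ¬G.Adj t u ∧ t ≠ u with hZt
  -- step 1
  have step1 : ∀ y, G.Adj u y → y ≠ v → y ≠ w → y ≠ x →
      (G.Adj y v ∧ G.Adj y x ∧ ¬G.Adj y w) := by
    intro y huy hyv hyw hyx
    have hyu : G.Adj y u := huy.symm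
    rcases even_of_not_oddTri tri1 hno1 y with ⟨-, h2, h3⟩ | ⟨-, h2, h3⟩ |
      ⟨h1, -, -⟩ | ⟨h1, -, -⟩
    · -- Adj y v, ¬ Adj y w
      rcases even_of_not_oddTri tri2 hno2 y with ⟨-, g2, -⟩ | ⟨-, -, g3⟩ |
        ⟨g1, -, -⟩ | ⟨g1, -, -⟩
      · exact absurd g2 h3
      · exact ⟨h2, g3, h3⟩
      · exact absurd hyu g1
      · exact absurd hyu g1
    · -- ¬Adj y v, Adj y w : impossible
      exfalso
      rcases even_of_not_oddTri tri2 hno2 y with ⟨-, -, g3⟩ | ⟨-, g2, -⟩ |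
        ⟨g1, -, -⟩ | ⟨g1, -, -⟩
      · exact hclaw u y v x huy huv hux (fun h => h2 h) (fun h => g3 h) hnvx hyv hyx dvx
      · exact g2 h3
      · exact g1 hyu
      · exact g1 hyu
    · exact absurd hyu h1
    · exact absurd hyu h1
  -- properties of Y-type vertices
  have yne : ∀ t, Yt t → t ≠ v ∧ t ≠ w ∧ t ≠ x := by
    intro t ⟨h1, h2, h3⟩
    refine ⟨?_, h3, ?_⟩
    · rintro rfl; exact h2 havw
    · rintro rfl; exact h2 hawx.symm
  have yprops : ∀ t, Yt t → G.Adj t v ∧ G.Adj t x ∧ ¬G.Adj t w ∧ G.Adj u t := by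
    intro t ht
    obtain ⟨n1, n2, n3⟩ := yne t ht
    obtain ⟨p1, p2, p3⟩ := step1 t ht.1 n1 n2 n3
    exact ⟨p1, p2, p3, ht.1⟩
  have yuniq : ∀ y y', Yt y → Yt y' → y = y' := by
    intro y y' hy hy'
    by_contra hne
    obtain ⟨yv, yx, yw, uy⟩ := yprops y hy
    obtain ⟨yv', yx', yw', uy'⟩ := yprops y' hy'
    have hadjyy' : G.Adj y y' := by
      by_contra hnadj
      exact hclaw u y y' w uy uy' huw hnadj yw yw' hne hy.2.2 hy'.2.2
    have O1 : OddTri G y y' v :=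
      oddTri_of_three ⟨hadjyy', yv, yv'⟩ uy uy' huv
    have O2 : OddTri G y y' x :=
      oddTri_of_three ⟨hadjyy', yx, yx'⟩ uy uy' hux
    exact hnvx (hK y y' v x O1 O2 dvx v (by simp) x (by simp) dvx)
  -- properties of Z-type vertices
  have zne : ∀ t, Zt t → t ≠ v ∧ t ≠ u ∧ t ≠ x := by
    intro t ⟨h1, h2, h3⟩
    refine ⟨?_, h3, ?_⟩
    · rintro rfl; exact h2 huv.symm
    · rintro rfl; exact h2 hux.symm
  have zprops : ∀ t, Zt t → G.Adj t v ∧ G.Adj t x ∧ ¬G.Adj t u ∧ G.Adj w t := by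
    intro t ht
    obtain ⟨n1, n2, n3⟩ := zne t ht
    have htw : G.Adj t w := ht.1.symm
    have hnytype : ¬ (G.Adj t v) → False := by
      intro hntv
      rcases even_of_not_oddTri tri1 hno1 t with ⟨h1, h2, -⟩ | ⟨h1, -, -⟩ |
        ⟨-, h2, -⟩ | ⟨-, -, h3⟩
      · exact hntv h2
      · -- Adj t u, ¬ Adj t v : t is a neighbour of u outside {v,w,x}, so Adj t v
        have htw' : t ≠ w := htw.ne
        obtain ⟨q1, -, -⟩ := step1 t h1.symm n1 htw' n3
        exact hntv q1
      · exact hntv h2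
      · exact h3 htw
    have htv : G.Adj t v := by
      by_contra hntv
      exact hnytype hntv
    have htx : G.Adj t x := by
      rcases even_of_not_oddTri tri2 hno2 t with ⟨h1, -, -⟩ | ⟨h1, -, -⟩ |
        ⟨-, -, h3⟩ | ⟨-, h2, -⟩
      · exact absurd h1 ht.2.1
      · exact absurd h1 ht.2.1
      · exact h3
      · exact absurd htw h2
    exact ⟨htv, htx, ht.2.1, ht.1⟩
  have zuniq : ∀ z z', Zt z → Zt z' → z = z' := by
    intro z z' hz hz'
    by_contra hne
    obtain ⟨zv, zx, zu, wz⟩ := zprops z hz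
    obtain ⟨zv', zx', zu', wz'⟩ := zprops z' hz'
    have hadjzz' : G.Adj z z' := by
      by_contra hnadj
      exact hclaw w z z' u wz wz' huw.symm hnadj zu zu' hne hz.2.2 hz'.2.2
    have O1 : OddTri G z z' v :=
      oddTri_of_three ⟨hadjzz', zv, zv'⟩ wz wz' havw.symm
    have O2 : OddTri G z z' x :=
      oddTri_of_three ⟨hadjzz', zx, zx'⟩ wz wz' hawx
    exact hnvx (hK z z' v x O1 O2 dvx v (by simp) x (by simp) dvx)
  -- step 5 : y and z types are adjacent
  have yz : ∀ y z, Yt y → Zt z → G.Adj y z := by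
    intro y z hy hz
    obtain ⟨yv, yx, yw, uy⟩ := yprops y hy
    obtain ⟨zv, zx, zu, wz⟩ := zprops z hz
    by_contra hnyz
    have O1 : OddTri G u y v := by
      refine oddTri_perm2 (oddTri_perm1 (oddTri_of_one (v := z) ⟨huv.symm, yv.symm, uy⟩
        zv ?_ ?_))
      · exact fun h => zu h
      · exact fun h => hnyz h.symm
    have O2 : OddTri G u y x := by
      refine oddTri_perm2 (oddTri_perm1 (oddTri_of_one (v := z) ⟨hux.symm, yx.symm, uy⟩
        zx ?_ ?_))
      · exact fun h => zu h
      · exact fun h => hnyz h.symm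
    exact hnvx (hK u y v x O1 O2 dvx v (by simp) x (by simp) dvx)
  -- neighbourhood bounds
  have Nv : ∀ p, G.Adj v p → p = u ∨ p = w ∨ Yt p ∨ Zt p := by
    intro p hvp
    have hpv : G.Adj p v := hvp.symm
    rcases even_of_not_oddTri tri1 hno1 p with ⟨h1, -, h3⟩ | ⟨-, h2, -⟩ |
      ⟨h1, -, h3⟩ | ⟨-, h2, -⟩
    · -- Adj p u, ¬ Adj p w
      by_cases hpw : p = w
      · exact Or.inr (Or.inl hpw)
      · exact Or.inr (Or.inr (Or.inl ⟨h1.symm, h3, hpw⟩))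
    · exact absurd hpv h2
    · -- ¬ Adj p u, Adj p w
      by_cases hpu : p = u
      · exact Or.inl hpu
      · exact Or.inr (Or.inr (Or.inr ⟨h3.symm, h1, hpu⟩))
    · exact absurd hpv h2
  have Nx : ∀ p, G.Adj x p → p = u ∨ p = w ∨ Yt p ∨ Zt p := by
    intro p hxp
    have hpx : G.Adj p x := hxp.symm
    rcases even_of_not_oddTri tri2 hno2 p with ⟨-, -, h3⟩ | ⟨h1, h2, -⟩ |
      ⟨h1, h2, -⟩ | ⟨-, -, h3⟩
    · exact absurd hpx h3
    · -- Adj p u, ¬ Adj p w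
      by_cases hpw : p = w
      · exact Or.inr (Or.inl hpw)
      · exact Or.inr (Or.inr (Or.inl ⟨h1.symm, h2, hpw⟩))
    · -- ¬ Adj p u, Adj p w
      by_cases hpu : p = u
      · exact Or.inl hpu
      · exact Or.inr (Or.inr (Or.inr ⟨h2.symm, h1, hpu⟩))
    · exact absurd hpx h3
  have Nu : ∀ p, G.Adj u p → p = v ∨ p = w ∨ p = x ∨ Yt p := by
    intro p hup
    by_cases h1 : p = v
    · exact Or.inl h1
    by_cases h2 : p = w
    · exact Or.inr (Or.inl h2)
    by_cases h3 : p = x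
    · exact Or.inr (Or.inr (Or.inl h3))
    obtain ⟨-, -, hpw⟩ := step1 p hup h1 h2 h3
    exact Or.inr (Or.inr (Or.inr ⟨hup, hpw, h2⟩))
  have Nw : ∀ p, G.Adj w p → p = u ∨ p = v ∨ p = x ∨ Zt p := by
    intro p hwp
    by_cases h1 : p = u
    · exact Or.inl h1
    by_cases h2 : p = v
    · exact Or.inr (Or.inl h2)
    by_cases h3 : p = x
    · exact Or.inr (Or.inr (Or.inl h3))
    have hpw : G.Adj p w := hwp.symm
    rcases even_of_not_oddTri tri1 hno1 p with ⟨-, -, g3⟩ | ⟨g1, g2, -⟩ |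
      ⟨g1, -, -⟩ | ⟨-, -, g3⟩
    · exact absurd hpw g3
    · -- Adj p u, ¬ Adj p v : impossible since p would be Y-type but Adj p w
      exfalso
      have hpw' : p ≠ w := hwp.ne'
      obtain ⟨q1, -, q3⟩ := step1 p g1.symm h2 hpw' h3
      exact q3 hpw
    · exact Or.inr (Or.inr (Or.inr ⟨hwp, g1, h1⟩))
    · exact absurd hpw g3
  have Ny : ∀ y, Yt y → ∀ b, G.Adj y b → b = u ∨ b = v ∨ b = x ∨ Zt b := by
    intro y hy b hyb
    obtain ⟨yv, yx, yw, uy⟩ := yprops y hy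
    by_cases h1 : b = u
    · exact Or.inl h1
    by_cases h2 : b = v
    · exact Or.inr (Or.inl h2)
    by_cases h3 : b = x
    · exact Or.inr (Or.inr (Or.inl h3))
    by_cases h4 : Zt b
    · exact Or.inr (Or.inr (Or.inr h4))
    exfalso
    have hbw : b ≠ w := by
      rintro rfl
      exact yw hyb
    have hnbv : ¬ G.Adj b v := by
      intro hbv
      rcases Nv b hbv.symm with h | h | h | h
      · exact h1 h
      · exact hbw h
      · exact hyb.ne (yuniq y b hy h)
      · exact h4 h
    have hnbx : ¬ G.Adj b x := by
      intro hbx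
      rcases Nx b hbx.symm with h | h | h | h
      · exact h1 h
      · exact hbw h
      · exact hyb.ne (yuniq y b hy h)
      · exact h4 h
    exact hclaw y b v x hyb yv yx hnbv hnbx hnvx h2 h3 dvx
  have Nz : ∀ z, Zt z → ∀ b, G.Adj z b → b = w ∨ b = v ∨ b = x ∨ Yt b := by
    intro z hz b hzb
    obtain ⟨zv, zx, zu, wz⟩ := zprops z hz
    by_cases h1 : b = w
    · exact Or.inl h1
    by_cases h2 : b = v
    · exact Or.inr (Or.inl h2)
    by_cases h3 : b = x
    · exact Or.inr (Or.inr (Or.inl h3))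
    by_cases h4 : Yt b
    · exact Or.inr (Or.inr (Or.inr h4))
    exfalso
    have hbu : b ≠ u := by
      rintro rfl
      exact zu hzb
    have hnbv : ¬ G.Adj b v := by
      intro hbv
      rcases Nv b hbv.symm with h | h | h | h
      · exact hbu h
      · exact h1 h
      · exact h4 h
      · exact hzb.ne (zuniq z b hz h)
    have hnbx : ¬ G.Adj b x := by
      intro hbx
      rcases Nx b hbx.symm with h | h | h | h
      · exact hbu h
      · exact h1 h
      · exact h4 h
      · exact hzb.ne (zuniq z b hz h)
    exact hclaw z b v x hzb zv zx hnbv hnbx hnvx h2 h3 dvx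
  -- the component
  set C : Set V := {t | t = u ∨ t = v ∨ t = w ∨ t = x ∨ Yt t ∨ Zt t} with hC
  have memC : ∀ t, t = u ∨ t = v ∨ t = w ∨ t = x ∨ Yt t ∨ Zt t → t ∈ C := fun t h => h
  have closure : ∀ a ∈ C, ∀ b, G.Adj a b → b ∈ C := by
    intro a ha b hab
    rcases ha with rfl | rfl | rfl | rfl | hya | hza
    · rcases Nu b hab with h | h | h | h <;> apply memC <;> tauto
    · rcases Nv b hab with h | h | h | h <;> apply memC <;> tauto
    · rcases Nw b hab with h | h | h | h <;> apply memC <;> tauto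
    · rcases Nx b hab with h | h | h | h <;> apply memC <;> tauto
    · rcases Ny a hya b hab with h | h | h | h <;> apply memC <;> tauto
    · rcases Nz a hza b hab with h | h | h | h <;> apply memC <;> tauto
  have compEq : Comp G u = C := by
    have walkC : ∀ (a b : V) (p : G.Walk a b), a ∈ C → b ∈ C := by
      intro a b p
      induction p with
      | nil => exact id
      | cons h p ih => exact fun ha => ih (closure _ ha _ h)
    ext t
    constructor
    · intro ht
      obtain ⟨p⟩ := ht
      exact walkC u t p (memC u (Or.inl rfl))
    · intro ht
      rcases ht with rfl | rfl | rfl | rfl | hyt | hzt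
      · exact Reachable.refl t
      · exact huv.reachable
      · exact huw.reachable
      · exact hux.reachable
      · exact hyt.1.reachable
      · exact huw.reachable.trans hzt.1.reachable
  -- the labelling
  set l : V → Sym2 (Fin 4) := fun t =>
    if t = u then s(0, 1) else if t = w then s(0, 2) else if t = v then s(0, 3)
    else if t = x then s(1, 2) else if G.Adj u t then s(1, 3) else s(2, 3) with hldef
  have lu : l u = s(0, 1) := by simp [hldef]
  have lw : l w = s(0, 2) := by simp [hldef, huw.ne']
  have lv : l v = s(0, 3) := by simp [hldef, huv.ne', havw.ne]
  have lx : l x = s(1, 2) := by simp [hldef, hux.ne', hawx.ne', dvx.symm]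
  have ly : ∀ t, Yt t → l t = s(1, 3) := by
    intro t ht
    obtain ⟨n1, n2, n3⟩ := yne t ht
    simp [hldef, ht.1.ne', n1, n2, n3, ht.1]
  have lz : ∀ t, Zt t → l t = s(2, 3) := by
    intro t ht
    obtain ⟨n1, n2, n3⟩ := zne t ht
    have hnu : ¬ G.Adj u t := fun h => ht.2.1 h.symm
    simp [hldef, n1, n2, n3, ht.1.ne', hnu]
  rw [compEq]
  refine ⟨l, ?_, ?_, ?_⟩
  · -- adjacency
    intro a ha b hb
    rcases ha with rfl | rfl | rfl | rfl | hya | hza <;>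
      rcases hb with rfl | rfl | rfl | rfl | hyb | hzb
    · rw [lu]; exact iff_of_false (G.loopless.irrefl _) (by simp)
    · rw [lu, lv]; exact iff_of_true huv (by decide)
    · rw [lu, lw]; exact iff_of_true huw (by decide)
    · rw [lu, lx]; exact iff_of_true hux (by decide)
    · rw [lu, ly b hyb]; exact iff_of_true (yprops b hyb).2.2.2 (by decide)
    · rw [lu, lz b hzb]
      exact iff_of_false (fun h => hzb.2.1 h.symm) (by decide)
    · rw [lv, lu]; exact iff_of_true huv.symm (by decide)
    · rw [lv]; exact iff_of_false (G.loopless.irrefl _) (by simp)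
    · rw [lv, lw]; exact iff_of_true havw (by decide)
    · rw [lv, lx]; exact iff_of_false hnvx (by decide)
    · rw [lv, ly b hyb]; exact iff_of_true (yprops b hyb).1.symm (by decide)
    · rw [lv, lz b hzb]; exact iff_of_true (zprops b hzb).1.symm (by decide)
    · rw [lw, lu]; exact iff_of_true huw.symm (by decide)
    · rw [lw, lv]; exact iff_of_true havw.symm (by decide)
    · rw [lw]; exact iff_of_false (G.loopless.irrefl _) (by simp)
    · rw [lw, lx]; exact iff_of_true hawx (by decide)
    · rw [lw, ly b hyb]
      exact iff_of_false (fun h => (yprops b hyb).2.2.1 h.symm) (by decide)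
    · rw [lw, lz b hzb]; exact iff_of_true (zprops b hzb).2.2.2 (by decide)
    · rw [lx, lu]; exact iff_of_true hux.symm (by decide)
    · rw [lx, lv]; exact iff_of_false (fun h => hnvx h.symm) (by decide)
    · rw [lx, lw]; exact iff_of_true hawx.symm (by decide)
    · rw [lx]; exact iff_of_false (G.loopless.irrefl _) (by simp)
    · rw [lx, ly b hyb]; exact iff_of_true (yprops b hyb).2.1.symm (by decide)
    · rw [lx, lz b hzb]; exact iff_of_true (zprops b hzb).2.1.symm (by decide)
    · rw [ly a hya, lu]; exact iff_of_true (yprops a hya).2.2.2.symm (by decide)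
    · rw [ly a hya, lv]; exact iff_of_true (yprops a hya).1 (by decide)
    · rw [ly a hya, lw]; exact iff_of_false (yprops a hya).2.2.1 (by decide)
    · rw [ly a hya, lx]; exact iff_of_true (yprops a hya).2.1 (by decide)
    · have hab : a = b := yuniq a b hya hyb
      subst hab
      rw [ly a hya]
      exact iff_of_false (G.loopless.irrefl a) (by simp)
    · rw [ly a hya, lz b hzb]; exact iff_of_true (yz a b hya hzb) (by decide)
    · rw [lz a hza, lu]; exact iff_of_false hza.2.1 (by decide)
    · rw [lz a hza, lv]; exact iff_of_true (zprops a hza).1 (by decide)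
    · rw [lz a hza, lw]; exact iff_of_true (zprops a hza).2.2.2.symm (by decide)
    · rw [lz a hza, lx]; exact iff_of_true (zprops a hza).2.1 (by decide)
    · rw [lz a hza, ly b hyb]; exact iff_of_true (yz b a hyb hza).symm (by decide)
    · have hab : a = b := zuniq a b hza hzb
      subst hab
      rw [lz a hza]
      exact iff_of_false (G.loopless.irrefl a) (by simp)
  · -- injectivity
    intro a ha b hb hl
    rcases ha with rfl | rfl | rfl | rfl | hya | hza <;>
      rcases hb with rfl | rfl | rfl | rfl | hyb | hzb
    · rfl
    · rw [lu, lv] at hl; exact absurd hl (by decide)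
    · rw [lu, lw] at hl; exact absurd hl (by decide)
    · rw [lu, lx] at hl; exact absurd hl (by decide)
    · rw [lu, ly b hyb] at hl; exact absurd hl (by decide)
    · rw [lu, lz b hzb] at hl; exact absurd hl (by decide)
    · rw [lv, lu] at hl; exact absurd hl (by decide)
    · rfl
    · rw [lv, lw] at hl; exact absurd hl (by decide)
    · rw [lv, lx] at hl; exact absurd hl (by decide)
    · rw [lv, ly b hyb] at hl; exact absurd hl (by decide)
    · rw [lv, lz b hzb] at hl; exact absurd hl (by decide)
    · rw [lw, lu] at hl; exact absurd hl (by decide)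
    · rw [lw, lv] at hl; exact absurd hl (by decide)
    · rfl
    · rw [lw, lx] at hl; exact absurd hl (by decide)
    · rw [lw, ly b hyb] at hl; exact absurd hl (by decide)
    · rw [lw, lz b hzb] at hl; exact absurd hl (by decide)
    · rw [lx, lu] at hl; exact absurd hl (by decide)
    · rw [lx, lv] at hl; exact absurd hl (by decide)
    · rw [lx, lw] at hl; exact absurd hl (by decide)
    · rfl
    · rw [lx, ly b hyb] at hl; exact absurd hl (by decide)
    · rw [lx, lz b hzb] at hl; exact absurd hl (by decide)
    · rw [ly a hya, lu] at hl; exact absurd hl (by decide)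
    · rw [ly a hya, lv] at hl; exact absurd hl (by decide)
    · rw [ly a hya, lw] at hl; exact absurd hl (by decide)
    · rw [ly a hya, lx] at hl; exact absurd hl (by decide)
    · exact yuniq a b hya hyb
    · rw [ly a hya, lz b hzb] at hl; exact absurd hl (by decide)
    · rw [lz a hza, lu] at hl; exact absurd hl (by decide)
    · rw [lz a hza, lv] at hl; exact absurd hl (by decide)
    · rw [lz a hza, lw] at hl; exact absurd hl (by decide)
    · rw [lz a hza, lx] at hl; exact absurd hl (by decide)
    · rw [lz a hza, ly b hyb] at hl; exact absurd hl (by decide)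
    · exact zuniq a b hza hzb
  · -- nondiagonal
    intro a ha
    rcases ha with rfl | rfl | rfl | rfl | hya | hza
    · rw [lu]; decide
    · rw [lv]; decide
    · rw [lw]; decide
    · rw [lx]; decide
    · rw [ly a hya]; decide
    · rw [lz a hza]; decide

/-! ## at most two classes -/

lemma two_classes
    (hclaw : ∀ u v1 v2 v3 : V, G.Adj u v1 → G.Adj u v2 → G.Adj u v3 →
      ¬G.Adj v1 v2 → ¬G.Adj v1 v3 → ¬G.Adj v2 v3 → v1 ≠ v2 → v1 ≠ v3 → v2 ≠ v3 → False)
    (hK : ∀ a b c d : V, OddTri G a b c → OddTri G a b d → c ≠ d →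
      ∀ x ∈ ({a, b, c, d} : Set V), ∀ y ∈ ({a, b, c, d} : Set V), x ≠ y → G.Adj x y)
    {u v w x : V}
    (huv : G.Adj u v) (huw : G.Adj u w) (hux : G.Adj u x)
    (dvw : v ≠ w) (dvx : v ≠ x) (dwx : w ≠ x)
    (hn1 : ¬ P G u v w) (hn2 : ¬ P G u w x) (hn3 : ¬ P G u v x) : False := by
  have hno1 : ¬ OddTri G u v w := fun o => hn1 (Or.inl o)
  have hno2 : ¬ OddTri G u w x := fun o => hn2 (Or.inl o)
  have hno3 : ¬ OddTri G u v x := fun o => hn3 (Or.inl o)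
  have finish : HasLabel G (Comp G u) → False := by
    intro hlab
    rcases pigeon hlab huv huw hux dvw dvx dwx with h | h | h
    · exact hn1 h
    · exact hn2 h
    · exact hn3 h
  by_cases avw : G.Adj v w <;> by_cases awx : G.Adj w x <;> by_cases avx : G.Adj v x
  · -- all adjacent : u v w x is a K4, so witness x makes uvw odd
    exact hno1 (oddTri_of_three ⟨huv, huw, avw⟩ hux.symm avx.symm awx.symm)
  · -- vw, wx adjacent, vx not : canonical case B
    exact finish (caseB hclaw hK huv huw hux avw awx avx dvx hno1 hno2)
  · -- vw, vx adjacent, wx not : case B with middle v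
    refine finish (caseB hclaw hK huw huv hux avw.symm avx awx dwx ?_ hno3)
    exact fun o => hno1 (oddTri_perm2 o)
  · -- only vw adjacent : witness x makes uvw odd
    exact hno1 (oddTri_of_one ⟨huv, huw, avw⟩ hux.symm
      (fun h => avx h.symm) (fun h => awx h.symm))
  · -- wx, vx adjacent, vw not : case B with middle x
    refine finish (caseB hclaw hK huv hux huw avx awx.symm avw dvw hno3 ?_)
    exact fun o => hno2 (oddTri_perm2 o)
  · -- only wx adjacent : witness v makes uwx odd
    exact hno2 (oddTri_of_one ⟨huw, hux, awx⟩ huv.symm avw avx)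
  · -- only vx adjacent : witness w makes uvx odd
    exact hno3 (oddTri_of_one ⟨huv, hux, avx⟩ huw.symm
      (fun h => avw h.symm) (fun h => awx h))
  · -- none adjacent : claw
    exact hclaw u v w x huv huw hux avw avx awx dvw dvx dwx

/-! ## the sigma function -/

def Rel (G : SimpleGraph V) (u v w : V) : Prop := v = w ∨ P G u v w

lemma Rel_symm {u v w : V} (h : Rel G u v w) : Rel G u w v := by
  rcases h with h | h
  · exact Or.inl h.symm
  · exact Or.inr (P_swap h)

lemma Rel_trans (hK : ∀ a b c d : V, OddTri G a b c → OddTri G a b d → c ≠ d →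
      ∀ x ∈ ({a, b, c, d} : Set V), ∀ y ∈ ({a, b, c, d} : Set V), x ≠ y → G.Adj x y)
    {u v w x : V} (h1 : Rel G u v w) (h2 : Rel G u w x) : Rel G u v x := by
  rcases h1 with rfl | h1
  · exact h2
  rcases h2 with rfl | h2
  · exact Or.inr h1
  by_cases hvx : v = x
  · exact Or.inl hvx
  · exact Or.inr (P_trans hK h1 h2 hvx)

noncomputable def rep (G : SimpleGraph V) (u : V) : V :=
  if h : ∃ t, G.Adj u t then h.choose else u

lemma rep_adj {u : V} (h : ∃ t, G.Adj u t) : G.Adj u (rep G u) := by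
  rw [rep, dif_pos h]
  exact h.choose_spec

noncomputable def sig (G : SimpleGraph V) (u v : V) : Bool :=
  if Rel G u v (rep G u) then true else false

lemma sig_eq_iff
    (hclaw : ∀ u v1 v2 v3 : V, G.Adj u v1 → G.Adj u v2 → G.Adj u v3 →
      ¬G.Adj v1 v2 → ¬G.Adj v1 v3 → ¬G.Adj v2 v3 → v1 ≠ v2 → v1 ≠ v3 → v2 ≠ v3 → False)
    (hK : ∀ a b c d : V, OddTri G a b c → OddTri G a b d → c ≠ d →
      ∀ x ∈ ({a, b, c, d} : Set V), ∀ y ∈ ({a, b, c, d} : Set V), x ≠ y → G.Adj x y)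
    {u v w : V} (huv : G.Adj u v) (huw : G.Adj u w) :
    (sig G u v = sig G u w ↔ Rel G u v w) := by
  have hur : G.Adj u (rep G u) := rep_adj ⟨v, huv⟩
  by_cases h1 : Rel G u v (rep G u) <;> by_cases h2 : Rel G u w (rep G u) <;>
    simp only [sig, h1, h2, if_true, if_false]
  · simp only [true_iff]
    exact Rel_trans hK h1 (Rel_symm h2)
  · simp only [Bool.true_eq_false, false_iff]
    intro h
    exact h2 (Rel_trans hK (Rel_symm h) h1)
  · simp only [Bool.false_eq_true, false_iff]
    intro h
    exact h1 (Rel_trans hK h h2)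
  · simp only [true_iff]
    by_contra h
    have dvw : v ≠ w := fun he => h (Or.inl he)
    have dvr : v ≠ rep G u := fun he => h1 (Or.inl he)
    have dwr : w ≠ rep G u := fun he => h2 (Or.inl he)
    refine two_classes hclaw hK huv huw hur dvw dvr dwr ?_ ?_ ?_
    · exact fun p => h (Or.inr p)
    · exact fun p => h2 (Or.inr p)
    · exact fun p => h1 (Or.inr p)

/-! ## the construction -/

lemma backward
    (hclaw : ∀ u v1 v2 v3 : V, G.Adj u v1 → G.Adj u v2 → G.Adj u v3 →
      ¬G.Adj v1 v2 → ¬G.Adj v1 v3 → ¬G.Adj v2 v3 → v1 ≠ v2 → v1 ≠ v3 → v2 ≠ v3 → False)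
    (hK : ∀ a b c d : V, OddTri G a b c → OddTri G a b d → c ≠ d →
      ∀ x ∈ ({a, b, c, d} : Set V), ∀ y ∈ ({a, b, c, d} : Set V), x ≠ y → G.Adj x y) :
    IsLineGraph G := by
  classical
  set σ : V → V → Bool := sig G with hσdef
  have hsig : ∀ u v w : V, G.Adj u v → G.Adj u w → (σ u v = σ u w ↔ Rel G u v w) :=
    fun u v w huv huw => sig_eq_iff hclaw hK huv huw
  -- the setoid
  let r : V × Bool → V × Bool → Prop := fun a b =>
    a = b ∨ (G.Adj a.1 b.1 ∧ σ a.1 b.1 = a.2 ∧ σ b.1 a.1 = b.2)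
  have hrsymm : ∀ a b, r a b → r b a := by
    rintro a b (h | ⟨h1, h2, h3⟩)
    · exact Or.inl h.symm
    · exact Or.inr ⟨h1.symm, h3, h2⟩
  have hrtrans : ∀ a b c, r a b → r b c → r a c := by
    rintro a b c (rfl | ⟨h1, h2, h3⟩) h
    · exact h
    rcases h with rfl | ⟨g1, g2, g3⟩
    · exact Or.inr ⟨h1, h2, h3⟩
    obtain ⟨u, i⟩ := a
    obtain ⟨v, j⟩ := b
    obtain ⟨w, k⟩ := c
    simp only at h1 h2 h3 g1 g2 g3
    by_cases huw : u = w
    · subst huw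
      left
      have : i = k := by rw [← h2, ← g3]
      rw [this]
    · -- the key step
      have hσv : σ v u = σ v w := by rw [h3, g2]
      have hRel : Rel G v u w := (hsig v u w h1.symm g1).1 hσv
      have hP : P G v u w := by
        rcases hRel with he | hP
        · exact absurd he huw
        · exact hP
      have hPu : P G u v w := P_rot hP
      have hPw : P G w v u := P_rot (P_swap hP)
      have hadjuw : G.Adj u w := (P_isTri hP).2.2
      right
      refine ⟨hadjuw, ?_, ?_⟩
      · have := (hsig u v w h1 hadjuw).2 (Or.inr hPu)
        rw [← this, h2]
      · have := (hsig w v u g1.symm hadjuw.symm).2 (Or.inr hPw)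
        rw [← this, g3]
  letI S : Setoid (V × Bool) := ⟨r, fun a => Or.inl rfl, fun {a b} h => hrsymm a b h,
    fun {a b c} h g => hrtrans a b c h g⟩
  let Wt := Quotient S
  let ε : V → Sym2 Wt := fun t => s(⟦(t, false)⟧, ⟦(t, true)⟧)
  have eqv_iff : ∀ a b : V × Bool, (⟦a⟧ : Wt) = ⟦b⟧ ↔ r a b := fun a b => Quotient.eq
  have diag : ∀ t : V, (⟦(t, false)⟧ : Wt) ≠ ⟦(t, true)⟧ := by
    intro t h
    rcases (eqv_iff _ _).1 h with h | ⟨h1, -, -⟩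
    · simp at h
    · exact G.loopless.irrefl t h1
  have εinj : Function.Injective ε := by
    intro a b hab
    by_cases hne : a = b
    · exact hne
    have getσ : ∀ i j : Bool, (⟦(a, i)⟧ : Wt) = ⟦(b, j)⟧ → σ a b = i := by
      intro i j h
      rcases (eqv_iff _ _).1 h with h | ⟨-, h2, -⟩
      · exact absurd (congrArg Prod.fst h) hne
      · exact h2
    rcases Sym2.eq_iff.1 hab with ⟨e1, e2⟩ | ⟨e1, e2⟩
    · have p1 := getσ _ _ e1
      have p2 := getσ _ _ e2
      rw [p1] at p2
      exact absurd p2 (by decide)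
    · have p1 := getσ _ _ e1
      have p2 := getσ _ _ e2
      rw [p1] at p2
      exact absurd p2 (by decide)
  have adj_iff : ∀ u v : V, G.Adj u v ↔ (u ≠ v ∧ ∃ x : Wt, x ∈ ε u ∧ x ∈ ε v) := by
    intro u v
    constructor
    · intro huv
      refine ⟨huv.ne, ⟦(u, σ u v)⟧, ?_, ?_⟩
      · cases hσ : σ u v
        · exact Sym2.mem_mk_left _ _
        · exact Sym2.mem_mk_right _ _
      · have : (⟦(u, σ u v)⟧ : Wt) = ⟦(v, σ v u)⟧ :=
          (eqv_iff _ _).2 (Or.inr ⟨huv, rfl, rfl⟩)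
        rw [this]
        cases hσ : σ v u
        · exact Sym2.mem_mk_left _ _
        · exact Sym2.mem_mk_right _ _
    · rintro ⟨hne, x, hx1, hx2⟩
      have h1 : x = ⟦(u, false)⟧ ∨ x = ⟦(u, true)⟧ := Sym2.mem_iff.1 hx1
      have h2 : x = ⟦(v, false)⟧ ∨ x = ⟦(v, true)⟧ := Sym2.mem_iff.1 hx2
      have : ∃ i j : Bool, (⟦(u, i)⟧ : Wt) = ⟦(v, j)⟧ := by
        rcases h1 with h | h <;> rcases h2 with h' | h' <;>
          exact ⟨_, _, by rw [← h, ← h']⟩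
      obtain ⟨i, j, hij⟩ := this
      rcases (eqv_iff _ _).1 hij with h | ⟨h', -, -⟩
      · exact absurd (congrArg Prod.fst h) hne
      · exact h'
  -- the graph H
  let H : SimpleGraph Wt :=
    { Adj := fun A B => A ≠ B ∧ ∃ t, ε t = s(A, B)
      symm := ⟨by
        rintro A B ⟨h1, t, h2⟩
        exact ⟨h1.symm, t, h2.trans (Sym2.eq_swap)⟩⟩
      loopless := ⟨fun A h => h.1 rfl⟩ }
  have edge_mem : ∀ t, ε t ∈ H.edgeSet := by
    intro t
    have : H.Adj ⟦(t, false)⟧ ⟦(t, true)⟧ := ⟨diag t, t, rfl⟩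
    exact this
  let φ : V → H.edgeSet := fun t => ⟨ε t, edge_mem t⟩
  have φinj : Function.Injective φ := by
    intro a b h
    exact εinj (Subtype.ext_iff.1 h)
  have φsurj : Function.Surjective φ := by
    rintro ⟨e, he⟩
    have key : ∀ (e : Sym2 Wt), e ∈ H.edgeSet → ∃ t, ε t = e := by
      intro e
      refine Sym2.inductionOn (f := fun z => z ∈ H.edgeSet → ∃ t, ε t = z) e ?_
      intro A B hAB
      have hAB' : H.Adj A B := hAB
      obtain ⟨-, t, ht⟩ := hAB'
      exact ⟨t, ht⟩
    obtain ⟨t, ht⟩ := key e he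
    exact ⟨t, Subtype.ext ht⟩
  refine ⟨Wt, H, ⟨⟨Equiv.ofBijective φ ⟨φinj, φsurj⟩, ?_⟩⟩⟩
  intro a b
  rw [lineGraph_adj_iff_exists]
  constructor
  · rintro ⟨h1, x, hx1, hx2⟩
    exact (adj_iff a b).2 ⟨fun hab => h1 (by rw [hab]), x, hx1, hx2⟩
  · intro hab
    obtain ⟨hne, x, hx1, hx2⟩ := (adj_iff a b).1 hab
    exact ⟨fun h => hne (φinj h), x, hx1, hx2⟩

end VRW

/-- Van Rooij–Wilf: G is a line graph iff it has no induced claw and whenever two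
    odd triangles share an edge, their four vertices induce K₄. -/
theorem vanRooij_Wilf {V : Type} (G : SimpleGraph V) :
    IsLineGraph G ↔
      (∀ s : Set V, ¬ Nonempty (G.induce s ≃g completeBipartiteGraph (Fin 1) (Fin 3))) ∧
      (∀ a b c d : V, OddTri G a b c → OddTri G a b d → c ≠ d →
        ∀ x ∈ ({a, b, c, d} : Set V), ∀ y ∈ ({a, b, c, d} : Set V),
          x ≠ y → G.Adj x y) := by
  constructor
  · exact VRW.forward
  · rintro ⟨h1, h2⟩
    refine VRW.backward ?_ h2
    intro u v1 v2 v3 a1 a2 a3 n12 n13 n23 d12 d13 d23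
    exact h1 {u, v1, v2, v3} (VRW.claw_iso a1 a2 a3 n12 n13 n23 d12 d13 d23)
end

section
/- If a connected graph G is a line graph of some graph, then the edges of G can be partitioned into cliques so that each vertex lies in at most two cliques and any two distinct cliques of the partition share at most one vertex. -/
open SimpleGraph

/-- Edges of a connected line graph can be partitioned into cliques so that each
    vertex is in at most two cliques and any two cliques share at most one vertex. -/
theorem connected_lineGraph_krausz_partition {V : Type} (G : SimpleGraph V)
    (hconn : G.Connected) (h : IsLineGraph G) :
    ∃ C : Set (Set V),
      (∀ c ∈ C, G.IsClique c) ∧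
      (∀ a b : V, G.Adj a b → ∃! c, c ∈ C ∧ a ∈ c ∧ b ∈ c) ∧
      (∀ v : V, {c | c ∈ C ∧ v ∈ c}.encard ≤ 2) ∧
      (∀ c₁ ∈ C, ∀ c₂ ∈ C, c₁ ≠ c₂ → (c₁ ∩ c₂).encard ≤ 1) := by
  obtain ⟨W, H, ⟨φ⟩⟩ := h
  set f : V → Sym2 W := fun v => ((φ v : H.edgeSet) : Sym2 W) with hf
  have hfinj : Function.Injective f := by
    intro a b hab
    exact φ.injective (Subtype.ext hab)
  have hadj : ∀ a b, G.Adj a b ↔ f a ≠ f b ∧ (∃ w, w ∈ f a ∧ w ∈ f b) := by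
    intro a b
    rw [← φ.map_adj_iff, lineGraph_adj_iff_exists]
    constructor
    · rintro ⟨h1, h2⟩; exact ⟨fun hh => h1 (Subtype.ext hh), h2⟩
    · rintro ⟨h1, h2⟩; exact ⟨fun hh => h1 (congrArg Subtype.val hh), h2⟩
  -- key: two distinct "endpoints" in both f a and f b force f a = f b
  have key : ∀ (a b : V) (w w' : W), w ≠ w' → w ∈ f a → w' ∈ f a → w ∈ f b → w' ∈ f b →
      f a = f b := by
    intro a b w w' hww hwa hw'a hwb hw'b
    rw [(Sym2.mem_and_mem_iff hww).1 ⟨hwa, hw'a⟩, (Sym2.mem_and_mem_iff hww).1 ⟨hwb, hw'b⟩]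
  refine ⟨{S | ∃ w : W, S = {v | w ∈ f v}}, ?_, ?_, ?_, ?_⟩
  · rintro c ⟨w, rfl⟩ a ha b hb hne
    exact (hadj a b).2 ⟨fun hh => hne (hfinj hh), w, ha, hb⟩
  · intro a b hab
    obtain ⟨hne, w, hwa, hwb⟩ := (hadj a b).1 hab
    refine ⟨{v | w ∈ f v}, ⟨⟨w, rfl⟩, hwa, hwb⟩, ?_⟩
    rintro c ⟨⟨w', rfl⟩, hw'a, hw'b⟩
    have hww : w' = w := by
      by_contra hww
      exact hne (key a b w' w hww hw'a hwa hw'b hwb)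
    rw [hww]
  · intro v
    obtain ⟨⟨a, b⟩, hab⟩ := Quot.exists_rep (f v)
    have hsub : {c | (c ∈ {S | ∃ w : W, S = {v | w ∈ f v}}) ∧ v ∈ c} ⊆
        {{u | a ∈ f u}, {u | b ∈ f u}} := by
      rintro c ⟨⟨w, rfl⟩, hv⟩
      have : w ∈ f v := hv
      rw [← hab] at this
      rcases Sym2.mem_iff.1 this with h1 | h1 <;> subst h1
      · exact Set.mem_insert _ _
      · exact Set.mem_insert_of_mem _ rfl
    calc {c | (c ∈ {S | ∃ w : W, S = {v | w ∈ f v}}) ∧ v ∈ c}.encard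
        ≤ ({{u | a ∈ f u}, {u | b ∈ f u}} : Set (Set V)).encard := Set.encard_le_encard hsub
      _ ≤ 2 := by
          refine (Set.encard_insert_le _ _).trans ?_
          rw [Set.encard_singleton]; norm_num
  · rintro c₁ ⟨w₁, rfl⟩ c₂ ⟨w₂, rfl⟩ hne
    have hw : w₁ ≠ w₂ := by rintro rfl; exact hne rfl
    rw [Set.encard_le_one_iff]
    rintro a b ⟨ha1, ha2⟩ ⟨hb1, hb2⟩
    exact hfinj (key a b w₁ w₂ hw ha1 ha2 hb1 hb2)
end
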